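/- arXiv:1703.00236 — 13 statements merged into one kernel-verified Lean document; each statement's English description precedes it below -/
import Mathlib

section
/- For every finite simple graph G, if the vertex set of G can be partitioned into r sets each of which induces a clique in G, then G admits a very strong rainbow coloring using at most r(r+1)/2 colors; in particular vsrc(G) ≤ cp(G)(cp(G)+1)/2. -/
/-!
Colour an edge `xy` by the unordered pair of clique classes `{f x, f y}`; there are
`r(r+1)/2` such pairs. On a shortest path two vertices of the same class are at distance at
most one, so they are consecutive on the path. If two edges `v_i v_{i+1}` and `v_j v_{j+1}`
(`i < j`) carried the same pair, then either `v_i` and `v_{j+1}` would share a class, or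
`j = i + 1` and `v_i, v_{i+1}, v_{i+2}` would all share one; both are impossible.
-/

open SimpleGraph

/-- A very strong rainbow coloring: for every shortest path (a path whose length equals the
distance between its endpoints), all edges receive pairwise distinct colors. -/
def IsVSRC {V : Type*} (G : SimpleGraph V) (c : Sym2 V → ℕ) : Prop :=
  ∀ (u v : V) (p : G.Walk u v), p.IsPath → p.length = G.dist u v →
    (p.edges.map c).Nodup

namespace SimpleGraph

variable {V : Type*} {G : SimpleGraph V}

theorem IsClique.dist_le_one {s : Set V} (hs : G.IsClique s) {x y : V} (hx : x ∈ s)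
    (hy : y ∈ s) : G.dist x y ≤ 1 := by
  by_cases hxy : x = y
  · simp [hxy]
  · exact (dist_eq_one_iff_adj.mpr (hs hx hy hxy)).le

namespace Walk

theorem sub_le_dist_getVert {u v : V} {p : G.Walk u v} (hp : p.length = G.dist u v)
    {k m : ℕ} (hm : m ≤ p.length) : m - k ≤ G.dist (p.getVert k) (p.getVert m) := by
  have hreach : G.Reachable (p.getVert k) (p.getVert m) :=
    (p.drop k).reachable.trans (p.drop m).reachable.symm
  obtain ⟨q, hq⟩ := hreach.exists_walk_length_eq_dist
  have hshortcut := dist_le ((p.take k).append (q.append (p.drop m)))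
  simp only [length_append, take_length, drop_length] at hshortcut
  omega

theorem le_succ_of_isClique_getVert {u v : V} {p : G.Walk u v} (hp : p.length = G.dist u v)
    {s : Set V} (hs : G.IsClique s) {k m : ℕ} (hm : m ≤ p.length) (hks : p.getVert k ∈ s)
    (hms : p.getVert m ∈ s) : m ≤ k + 1 := by
  have := (sub_le_dist_getVert hp (k := k) hm).trans (hs.dist_le_one hks hms)
  omega

theorem nodup_edges_map_sym2Map {ι : Type*} (f : V → ι)
    (hf : ∀ i, G.IsClique {v | f v = i}) {u v : V} {p : G.Walk u v}
    (hp : p.length = G.dist u v) : (p.edges.map (Sym2.map f)).Nodup := by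
  have hclose : ∀ {k m}, m ≤ p.length → f (p.getVert k) = f (p.getVert m) → m ≤ k + 1 :=
    fun hm hkm => le_succ_of_isClique_getVert hp (hf _) hm rfl hkm.symm
  rw [List.nodup_iff_pairwise_ne, List.pairwise_iff_getElem]
  intro i j hi hj hij hsame
  simp only [List.length_map, length_edges] at hi hj
  simp only [List.getElem_map, getElem_edges, Sym2.map_mk, Sym2.eq_iff] at hsame
  rcases hsame with ⟨hij_start, hij_end⟩ | ⟨hcross, -⟩
  · obtain rfl : j = i + 1 := le_antisymm (hclose hj.le hij_start) hij
    have := hclose (k := i) (m := i + 2) (by omega) (hij_start.trans hij_end)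
    omega
  · have := hclose (k := i) (m := j + 1) (by omega) hcross
    omega

end Walk

end SimpleGraph

theorem stmt_0_general {V : Type*} (G : SimpleGraph V) (r : ℕ)
    (f : V → Fin r) (hf : ∀ i : Fin r, G.IsClique {v | f v = i}) :
    ∃ c : Sym2 V → ℕ, IsVSRC G c ∧ ∀ e ∈ G.edgeSet, c e < r * (r + 1) / 2 := by
  have hcard : Fintype.card (Sym2 (Fin r)) = r * (r + 1) / 2 := by
    rw [Sym2.card, Fintype.card_fin, Nat.choose_two_right, Nat.add_sub_cancel, Nat.mul_comm]
  let code : Sym2 (Fin r) ≃ Fin (r * (r + 1) / 2) := Fintype.equivFinOfCardEq hcard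
  refine ⟨fun e => code (e.map f), ?_, fun e _ => (code (e.map f)).isLt⟩
  intro u v p _ hp
  have hinj : Function.Injective fun x => (code x : ℕ) := Fin.val_injective.comp code.injective
  simpa only [List.map_map, Function.comp_def] using
    (Walk.nodup_edges_map_sym2Map f hf hp).map hinj

theorem stmt_0 {V : Type*} [Fintype V] (G : SimpleGraph V) (r : ℕ)
    (f : V → Fin r) (hf : ∀ i : Fin r, G.IsClique {v | f v = i}) :
    ∃ c : Sym2 V → ℕ, IsVSRC G c ∧ ∀ e ∈ G.edgeSet, c e < r * (r + 1) / 2 :=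
  stmt_0_general G r f hf
end

section
/- For every finite simple graph G, if the vertex set of G can be partitioned into r sets each of which induces a clique in G, then the graph Ĝ obtained from G by adding a universal vertex admits a very strong rainbow coloring using at most r(r+1)/2 colors; in particular vsrc(Ĝ) ≤ cp(G)(cp(G)+1)/2. -/
open SimpleGraph

/-- The graph Ĝ obtained from `G` by adding a new universal vertex (`none`). -/
def hatGraph {V : Type*} (G : SimpleGraph V) : SimpleGraph (Option V) where
  Adj x y :=
    match x, y with
    | some u, some v => G.Adj u v
    | some _, none => True
    | none, some _ => True
    | none, none => False
  symm := by
    constructor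
    rintro (_ | u) (_ | v) h <;> simp_all
    exact G.symm.symm _ _ h
  loopless := by
    constructor
    rintro (_ | u) h <;> simp_all

/-!
Every vertex of `G` is joined to the hub, so `Ĝ` has diameter at most two and its only shortest
paths with two edges are `a — w — b` with `a ≠ b` non-adjacent vertices of `G`; these lie in
different cliques of the partition. Colour an edge of `Ĝ` by the unordered pair of cliques of its
endpoints, where the hub counts as lying in the clique of the other endpoint. The two edges of
`a — w — b` then get `{[a], [w]}` and `{[w], [b]}` (or `{[a], [a]}` and `{[b], [b]}` when `w` is
the hub), which differ because `[a] ≠ [b]`. There are `r(r+1)/2` unordered pairs of cliques.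
-/

section VSRC

variable {W : Type*} {H : SimpleGraph W}

theorem isVSRC_of_dist_le_two {c : Sym2 W → ℕ} (hdist : ∀ u v, H.dist u v ≤ 2)
    (hc : ∀ u w v, H.Adj u w → H.Adj w v → H.dist u v = 2 → c s(u, w) ≠ c s(w, v)) :
    IsVSRC H c := by
  intro u v p _ hlen
  match p with
  | .nil => simp
  | .cons _ .nil => simp
  | .cons huw (.cons hwv .nil) =>
    simpa using hc _ _ _ huw hwv (by simpa using hlen.symm)
  | .cons _ (.cons _ (.cons _ q)) =>
    have := hdist u v
    simp only [Walk.length_cons] at hlen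
    omega

end VSRC

section HatGraph

variable {V : Type*} (G : SimpleGraph V)

theorem hatGraph_adj_some_none (a : V) : (hatGraph G).Adj (some a) none := trivial

theorem hatGraph_dist_le_two (x y : Option V) : (hatGraph G).dist x y ≤ 2 := by
  match x, y with
  | none, none => simp
  | some a, none => exact (dist_le (hatGraph_adj_some_none G a).toWalk).trans (by simp)
  | none, some b => exact (dist_le (hatGraph_adj_some_none G b).symm.toWalk).trans (by simp)
  | some a, some b =>
    exact dist_le (.cons (hatGraph_adj_some_none G a) (hatGraph_adj_some_none G b).symm.toWalk)

theorem exists_of_hatGraph_dist_eq_two {x y : Option V} (h : (hatGraph G).dist x y = 2) :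
    ∃ a b, x = some a ∧ y = some b ∧ a ≠ b ∧ ¬G.Adj a b := by
  have hxy : x ≠ y := by rintro rfl; simp at h
  have hadj : ¬(hatGraph G).Adj x y := fun hadj => by simp [dist_eq_one_iff_adj.2 hadj] at h
  match x, y with
  | none, none => exact absurd rfl hxy
  | some a, none => exact absurd (hatGraph_adj_some_none G a) hadj
  | none, some b => exact absurd (hatGraph_adj_some_none G b).symm hadj
  | some a, some b => exact ⟨a, b, rfl, rfl, fun hab => hxy (hab ▸ rfl), hadj⟩

end HatGraph

section DropHub

variable {V : Type*}

/-- The edge `e` of `Ĝ` with the hub replaced by the other endpoint; `v₀` is a junk value for the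
non-edge `s(none, none)`. -/
def dropHub (v₀ : V) : Sym2 (Option V) → Sym2 V :=
  Sym2.lift ⟨fun x y => s((x <|> y).getD v₀, (y <|> x).getD v₀), fun _ _ => Sym2.eq_swap⟩

@[simp] theorem dropHub_some_some (v₀ a b : V) : dropHub v₀ s(some a, some b) = s(a, b) := rfl

@[simp] theorem dropHub_some_none (v₀ a : V) : dropHub v₀ s(some a, none) = s(a, a) := rfl

@[simp] theorem dropHub_none_some (v₀ b : V) : dropHub v₀ s(none, some b) = s(b, b) := rfl

theorem map_dropHub_ne {α : Type*} (v₀ : V) (f : V → α) {a b : V} (hab : f a ≠ f b) (w : Option V) :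
    (dropHub v₀ s(some a, w)).map f ≠ (dropHub v₀ s(w, some b)).map f := by
  cases w <;> simp [hab]
  exact fun hat hbt => hab (hat.trans hbt)

end DropHub

theorem card_sym2_fin (r : ℕ) : Fintype.card (Sym2 (Fin r)) = r * (r + 1) / 2 := by
  rw [Sym2.card, Fintype.card_fin, Nat.choose_two_right, Nat.add_sub_cancel, mul_comm]

theorem stmt_1_general {V : Type*} (G : SimpleGraph V) (r : ℕ)
    (f : V → Fin r) (hf : ∀ i : Fin r, G.IsClique {v | f v = i}) :
    ∃ c : Sym2 (Option V) → ℕ, IsVSRC (hatGraph G) c ∧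
      ∀ e ∈ (hatGraph G).edgeSet, c e < r * (r + 1) / 2 := by
  have hclass {a b : V} (hab : a ≠ b) (hadj : ¬G.Adj a b) : f a ≠ f b :=
    fun h => hadj (hf (f b) h rfl hab)
  rcases isEmpty_or_nonempty V with _ | ⟨⟨v₀⟩⟩
  · refine ⟨0, isVSRC_of_dist_le_two (hatGraph_dist_le_two G) fun u w v _ _ h => ?_, ?_⟩
    · obtain ⟨a, -⟩ := exists_of_hatGraph_dist_eq_two G h
      exact isEmptyElim a
    · intro e he
      rw [Subsingleton.elim (hatGraph G) ⊥] at he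
      simp at he
  have hcode : Function.Injective (fun z => (Fintype.equivFin (Sym2 (Fin r)) z : ℕ)) :=
    Fin.val_injective.comp (Fintype.equivFin _).injective
  refine ⟨fun e => Fintype.equivFin (Sym2 (Fin r)) ((dropHub v₀ e).map f),
    isVSRC_of_dist_le_two (hatGraph_dist_le_two G) fun u w v _ _ h => ?_, fun e _ => ?_⟩
  · obtain ⟨a, b, rfl, rfl, hab, hadj⟩ := exists_of_hatGraph_dist_eq_two G h
    exact hcode.ne (map_dropHub_ne v₀ f (hclass hab hadj) w)
  · exact card_sym2_fin r ▸ Fin.isLt _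

theorem stmt_1 {V : Type*} [Fintype V] (G : SimpleGraph V) (r : ℕ)
    (f : V → Fin r) (hf : ∀ i : Fin r, G.IsClique {v | f v = i}) :
    ∃ c : Sym2 (Option V) → ℕ, IsVSRC (hatGraph G) c ∧
      ∀ e ∈ (hatGraph G).edgeSet, c e < r * (r + 1) / 2 :=
  stmt_1_general G r f hf
end

section
/- For every finite connected chordal graph G, vsrc(G) ≤ |V(G)| − ω(G) + 1, where ω(G) is the clique number of G. -/
/-!
By Dirac's lemma (minimal separators of a chordal graph are cliques), a finite chordal graph has
a simplicial vertex outside any proper clique. Removing such vertices one at a time yields a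
perfect elimination ordering that eliminates a maximum clique `K` last, so the first
`n - ω` positions hold the vertices outside `K`. Colour an edge by `1 +` the position of its
earlier endpoint when that position is `< n - ω`, and by `0` otherwise: `n - ω + 1` colours.
Shortest paths are chordless, and on a chordless path no colour repeats: two edges of the same
colour either share their earlier endpoint, whose later neighbours are adjacent, or lie inside
`K`; either way the path would have a chord.
-/

open SimpleGraph

/-- A cycle has a chord: an edge of the graph joining two (necessarily nonconsecutive)
vertices of the cycle which is not an edge of the cycle. -/
def HasChord {V : Type*} (G : SimpleGraph V) {v : V} (p : G.Walk v v) : Prop :=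
  ∃ x y : V, x ∈ p.support ∧ y ∈ p.support ∧ G.Adj x y ∧ s(x, y) ∉ p.edges

/-- A graph is chordal if every cycle of length at least 4 has a chord. -/
def IsChordal {V : Type*} (G : SimpleGraph V) : Prop :=
  ∀ (v : V) (p : G.Walk v v), p.IsCycle → 4 ≤ p.length → HasChord G p

namespace SimpleGraph

variable {V : Type*} {G : SimpleGraph V}

namespace Walk

variable {u v : V}

lemma exists_length_lt_of_adj_start {w d : V} (p : G.Walk u w) (hd : d ∈ p.support)
    (hadj : G.Adj u d) (hnot : s(u, d) ∉ p.edges) :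
    ∃ q : G.Walk u w, q.length < p.length ∧ q.support ⊆ p.support := by
  classical
  cases p with
  | nil => exact absurd hadj (by simp_all)
  | @cons _ v _ h p =>
    have hdp : d ∈ p.support := by
      simpa [hadj.ne.symm] using hd
    have hdv : d ≠ v := by
      rintro rfl
      simp at hnot
    refine ⟨cons hadj (p.dropUntil d hdp), ?_, ?_⟩
    · simpa using length_dropUntil_lt_length hdp hdv
    · simpa using List.Subset.trans (p.support_dropUntil_subset_support hdp)
        (List.subset_cons_self _ _)

lemma exists_length_lt_of_adj {c d : V} (p : G.Walk u v) (hc : c ∈ p.support)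
    (hd : d ∈ p.support) (hadj : G.Adj c d) (hnot : s(c, d) ∉ p.edges) :
    ∃ q : G.Walk u v, q.length < p.length ∧ q.support ⊆ p.support := by
  induction p with
  | nil => simp_all
  | @cons u _ _ h p ih =>
    by_cases hcu : c = u
    · subst hcu
      exact exists_length_lt_of_adj_start _ hd hadj hnot
    by_cases hdu : d = u
    · subst hdu
      exact exists_length_lt_of_adj_start _ hc hadj.symm (by rwa [Sym2.eq_swap])
    obtain ⟨q, hlt, hsub⟩ := ih (by simpa [hcu] using hc) (by simpa [hdu] using hd)
      (by simp_all)
    exact ⟨cons h q, by simpa using hlt, List.cons_subset_cons _ hsub⟩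

lemma isChordless_of_forall_length_le (p : G.Walk u v)
    (hp : ∀ q : G.Walk u v, q.support ⊆ p.support → p.length ≤ q.length) :
    p.IsChordless := by
  refine isChordless_iff_forall_mem_edges.mpr fun c d hc hd hadj => ?_
  by_contra hnot
  obtain ⟨q, hlt, hsub⟩ := p.exists_length_lt_of_adj hc hd hadj hnot
  exact (hp q hsub).not_gt hlt

lemma isChordless_of_length_eq_dist (p : G.Walk u v) (hp : p.length = G.dist u v) :
    p.IsChordless :=
  p.isChordless_of_forall_length_le fun q _ => hp ▸ dist_le q

lemma exists_isPath_isChordless_of_support_subset {T : Set V} (p : G.Walk u v)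
    (hp : ∀ z ∈ p.support, z ∈ T) :
    ∃ q : G.Walk u v, q.IsPath ∧ q.IsChordless ∧ ∀ z ∈ q.support, z ∈ T := by
  classical
  obtain ⟨q, hqT, hmin⟩ := exists_minimalFor_of_wellFoundedLT
    (fun q : G.Walk u v => ∀ z ∈ q.support, z ∈ T) length ⟨p, hp⟩
  have hbT : ∀ z ∈ q.bypass.support, z ∈ T :=
    fun z hz => hqT z (q.support_bypass_subset_support hz)
  refine ⟨q.bypass, q.bypass_isPath,
    q.bypass.isChordless_of_forall_length_le fun r hr => ?_, hbT⟩
  by_contra! hlt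
  have hle := q.length_bypass_le_length
  have := hmin (fun z hz => hbT z (hr hz)) (by omega)
  omega

variable {w : V} {h : G.Adj u v} {p : G.Walk v w}

lemma IsChordless.of_cons (hpath : (cons h p).IsPath) (hp : (cons h p).IsChordless) :
    p.IsChordless := by
  refine isChordless_iff_forall_mem_edges.mpr fun c d hc hd hadj => ?_
  have hu : u ∉ p.support := ((cons_isPath_iff h p).mp hpath).2
  have := hp.mem_edges (List.mem_cons_of_mem _ hc) (List.mem_cons_of_mem _ hd) hadj
  rw [edges_cons, List.mem_cons] at this
  rcases this with hcd | hcd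
  · rcases Sym2.eq_iff.mp hcd with ⟨rfl, -⟩ | ⟨-, rfl⟩ <;> contradiction
  · exact hcd

lemma IsChordless.eq_of_adj_of_cons (hpath : (cons h p).IsPath) (hp : (cons h p).IsChordless)
    {x : V} (hx : x ∈ p.support) (hux : G.Adj u x) : x = v := by
  have hu : u ∉ p.support := ((cons_isPath_iff h p).mp hpath).2
  have := hp.mem_edges (start_mem_support _) (List.mem_cons_of_mem _ hx) hux
  rw [edges_cons, List.mem_cons] at this
  rcases this with hux' | hux'
  · exact Sym2.congr_right.mp hux'
  · exact absurd (p.fst_mem_support_of_mem_edges hux') hu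

end Walk

def ReachableAvoiding (G : SimpleGraph V) (S : Set V) (a c : V) : Prop :=
  ∃ p : G.Walk a c, ∀ z ∈ p.support, z ∉ S

namespace ReachableAvoiding

variable {S : Set V} {a b c : V}

lemma refl (ha : a ∉ S) : G.ReachableAvoiding S a a :=
  ⟨Walk.nil, by simpa using ha⟩

lemma symm (h : G.ReachableAvoiding S a b) : G.ReachableAvoiding S b a := by
  obtain ⟨p, hp⟩ := h
  exact ⟨p.reverse, by simpa using hp⟩

lemma trans (h₁ : G.ReachableAvoiding S a b) (h₂ : G.ReachableAvoiding S b c) :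
    G.ReachableAvoiding S a c := by
  obtain ⟨p, hp⟩ := h₁
  obtain ⟨q, hq⟩ := h₂
  refine ⟨p.append q, fun z hz => ?_⟩
  rw [Walk.mem_support_append_iff] at hz
  exact hz.elim (hp z) (hq z)

lemma left_notMem (h : G.ReachableAvoiding S a b) : a ∉ S := by
  obtain ⟨p, hp⟩ := h
  exact hp a p.start_mem_support

lemma right_notMem (h : G.ReachableAvoiding S a b) : b ∉ S :=
  h.symm.left_notMem

lemma of_adj (h : G.ReachableAvoiding S a b) (hbc : G.Adj b c) (hc : c ∉ S) :
    G.ReachableAvoiding S a c :=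
  h.trans ⟨hbc.toWalk, by simp [h.right_notMem, hc]⟩

lemma of_mem_support {p : G.Walk a b} (hp : ∀ z ∈ p.support, z ∉ S) (hc : c ∈ p.support) :
    G.ReachableAvoiding S a c := by
  classical
  exact ⟨p.takeUntil c hc, fun z hz => hp z (p.support_takeUntil_subset_support hc hz)⟩

lemma exists_walk_of_adj {x y a₁ a₂ : V} (h₁ : G.ReachableAvoiding S a a₁)
    (h₂ : G.ReachableAvoiding S a a₂) (hx : G.Adj x a₁) (hy : G.Adj y a₂) :
    ∃ p : G.Walk x y, ∀ z ∈ p.support, z = x ∨ z = y ∨ G.ReachableAvoiding S a z := by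
  obtain ⟨p, hp⟩ := h₁
  obtain ⟨q, hq⟩ := h₂
  refine ⟨.cons hx ((p.reverse.append q).concat hy.symm), fun z hz => ?_⟩
  simp only [Walk.support_cons, Walk.support_concat, Walk.mem_support_append_iff,
    Walk.support_reverse, List.mem_cons, List.mem_append, List.mem_reverse,
    List.mem_nil_iff, or_false] at hz
  rcases hz with rfl | (hz | hz) | rfl
  · exact .inl rfl
  · exact .inr <| .inr <| of_mem_support hp hz
  · exact .inr <| .inr <| of_mem_support hq hz
  · exact .inr <| .inl rfl

/-- Take the first vertex outside the part of `a` on a walk avoiding `S \ {s}`. -/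
lemma exists_adj_of_diff_singleton {s : V} (ha : a ∉ S) (hab : ¬ G.ReachableAvoiding S a b)
    (h : G.ReachableAvoiding (S \ {s}) a b) :
    ∃ c, G.ReachableAvoiding S a c ∧ G.Adj c s := by
  obtain ⟨p, hp⟩ := h
  obtain ⟨d, hd, hfst, hsnd⟩ :=
    p.exists_boundary_dart {z | G.ReachableAvoiding S a z} (refl ha) hab
  have hdS : d.snd ∈ S := by_contra fun hdS => hsnd (hfst.of_adj d.adj hdS)
  have hds : d.snd = s := by
    by_contra hds
    exact hp _ (p.dart_snd_mem_support_of_mem_darts hd) ⟨hdS, hds⟩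
  exact ⟨d.fst, hfst, hds ▸ d.adj⟩

end ReachableAvoiding

lemma _root_.IsChordal.induce (h : IsChordal G) (s : Set V) : IsChordal (G.induce s) := by
  intro v p hp hlen
  let f := Embedding.induce s (G := G)
  obtain ⟨x, y, hx, hy, hadj, hxy⟩ :=
    h _ (p.map f.toHom) (hp.map f.injective) (by rwa [Walk.length_map])
  rw [Walk.support_map] at hx hy
  obtain ⟨x, hx', rfl⟩ := List.mem_map.mp hx
  obtain ⟨y, hy', rfl⟩ := List.mem_map.mp hy
  refine ⟨x, y, hx', hy', hadj, fun hmem => hxy ?_⟩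
  rw [Walk.edges_map]
  exact List.mem_map.mpr ⟨s(x, y), hmem, rfl⟩

lemma Walk.two_le_length {u v : V} (p : G.Walk u v) (hne : u ≠ v) (hadj : ¬ G.Adj u v) :
    2 ≤ p.length := by
  by_contra! h
  interval_cases hp : p.length
  exacts [hne (p.eq_of_length_eq_zero hp), hadj (p.adj_of_length_eq_one hp)]

/-- Otherwise the two paths close up to a cycle of length at least 4, which has no chord: a chord
can join neither two vertices of one chordless path nor a vertex of `A` to one of `B`. -/
theorem _root_.IsChordal.adj_of_isChordless_paths (hch : IsChordal G) {A B : Set V}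
    (hAB : ∀ a ∈ A, ∀ b ∈ B, a ≠ b ∧ ¬ G.Adj a b) {x y : V} (hxy : x ≠ y)
    {P : G.Walk x y} {Q : G.Walk y x} (hP : P.IsPath) (hQ : Q.IsPath)
    (hPc : P.IsChordless) (hQc : Q.IsChordless)
    (hPA : ∀ z ∈ P.support, z = x ∨ z = y ∨ z ∈ A)
    (hQB : ∀ z ∈ Q.support, z = y ∨ z = x ∨ z ∈ B) : G.Adj x y := by
  by_contra hnadj
  have hPQ : ∀ z ∈ P.support, z ∈ Q.support → z = x ∨ z = y := by
    intro z hzP hzQ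
    rcases hPA z hzP with h | h | hzA
    · exact .inl h
    · exact .inr h
    rcases hQB z hzQ with h | h | hzB
    · exact .inr h
    · exact .inl h
    · exact absurd rfl (hAB z hzA z hzB).1
  have hcross : ∀ c ∈ P.support, ∀ d ∈ Q.support, G.Adj c d →
      s(c, d) ∈ P.edges ∨ s(c, d) ∈ Q.edges := by
    intro c hcP d hdQ hcd
    by_cases hcQ : c ∈ Q.support
    · exact .inr (hQc.mem_edges hcQ hdQ hcd)
    by_cases hdP : d ∈ P.support
    · exact .inl (hPc.mem_edges hcP hdP hcd)
    have hcA : c ∈ A := by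
      rcases hPA c hcP with rfl | rfl | h
      · exact absurd Q.end_mem_support hcQ
      · exact absurd Q.start_mem_support hcQ
      · exact h
    have hdB : d ∈ B := by
      rcases hQB d hdQ with rfl | rfl | h
      · exact absurd P.end_mem_support hdP
      · exact absurd P.start_mem_support hdP
      · exact h
    exact absurd hcd (hAB c hcA d hdB).2
  have hPlen := P.two_le_length hxy hnadj
  have hQlen := Q.two_le_length hxy.symm (fun h => hnadj h.symm)
  have hdisj : P.support.tail.Disjoint Q.support.tail := fun z hzP hzQ => by
    rcases hPQ z (List.mem_of_mem_tail hzP) (List.mem_of_mem_tail hzQ) with rfl | rfl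
    · exact (List.nodup_cons.mp (P.cons_tail_support ▸ hP.support_nodup)).1 hzP
    · exact (List.nodup_cons.mp (Q.cons_tail_support ▸ hQ.support_nodup)).1 hzQ
  obtain ⟨c, d, hc, hd, hcd, hchord⟩ := hch x _ (hP.isCycle_append hQ hdisj (by omega))
    (by rw [Walk.length_append]; omega)
  rw [Walk.edges_append, List.mem_append] at hchord
  rw [Walk.mem_support_append_iff] at hc hd
  rcases hc with hc | hc <;> rcases hd with hd | hd
  · exact hchord (.inl (hPc.mem_edges hc hd hcd))
  · exact hchord (hcross c hc d hd hcd)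
  · exact hchord (Sym2.eq_swap ▸ hcross d hd c hc hcd.symm)
  · exact hchord (.inr (hQc.mem_edges hc hd hcd))

def IsSeparator (G : SimpleGraph V) (S : Set V) (a b : V) : Prop :=
  a ∉ S ∧ b ∉ S ∧ ¬ G.ReachableAvoiding S a b

lemma IsSeparator.symm {S : Set V} {a b : V} (h : G.IsSeparator S a b) : G.IsSeparator S b a :=
  ⟨h.2.1, h.1, fun hba => h.2.2 hba.symm⟩

lemma Minimal.isSeparator_symm {S : Set V} {a b : V} (h : Minimal (G.IsSeparator · a b) S) :
    Minimal (G.IsSeparator · b a) S :=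
  ⟨h.prop.symm, fun _ hT hTS => h.le_of_le hT.symm hTS⟩

lemma exists_minimal_isSeparator [Finite V] {a b : V} (hne : a ≠ b) (hadj : ¬ G.Adj a b) :
    ∃ S, Minimal (G.IsSeparator · a b) S := by
  have hsep : G.IsSeparator (G.neighborSet a) a b := by
    refine ⟨G.loopless.irrefl a, hadj, ?_⟩
    rintro ⟨p, hp⟩
    cases p with
    | nil => exact hne rfl
    | cons h p => exact hp _ (List.mem_cons_of_mem _ p.start_mem_support) h
  obtain ⟨S, -, hS⟩ := exists_minimal_le_of_wellFoundedLT (G.IsSeparator · a b) _ hsep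
  exact ⟨S, hS⟩

lemma Minimal.exists_adj_of_isSeparator {S : Set V} {a b s : V}
    (hS : Minimal (G.IsSeparator · a b) S) (hs : s ∈ S) :
    ∃ c, G.ReachableAvoiding S a c ∧ G.Adj c s := by
  obtain ⟨ha, hb, hab⟩ := hS.prop
  refine ReachableAvoiding.exists_adj_of_diff_singleton ha hab (by_contra fun h => ?_)
  exact hS.not_prop_of_lt (Set.sdiff_singleton_ssubset.mpr hs)
    ⟨fun ha' => ha ha'.1, fun hb' => hb hb'.1, h⟩

theorem _root_.IsChordal.isClique_of_minimal_isSeparator (hch : IsChordal G) {S : Set V}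
    {a b : V} (hS : Minimal (G.IsSeparator · a b) S) : G.IsClique S := by
  intro x hx y hy hxy
  obtain ⟨a₁, ha₁, hxa₁⟩ := hS.exists_adj_of_isSeparator hx
  obtain ⟨a₂, ha₂, hya₂⟩ := hS.exists_adj_of_isSeparator hy
  obtain ⟨b₁, hb₁, hxb₁⟩ := hS.isSeparator_symm.exists_adj_of_isSeparator hx
  obtain ⟨b₂, hb₂, hyb₂⟩ := hS.isSeparator_symm.exists_adj_of_isSeparator hy
  obtain ⟨P₀, hP₀⟩ := ha₁.exists_walk_of_adj ha₂ hxa₁.symm hya₂.symm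
  obtain ⟨Q₀, hQ₀⟩ := hb₂.exists_walk_of_adj hb₁ hyb₂.symm hxb₁.symm
  obtain ⟨P, hP, hPc, hPA⟩ := P₀.exists_isPath_isChordless_of_support_subset hP₀
  obtain ⟨Q, hQ, hQc, hQB⟩ := Q₀.exists_isPath_isChordless_of_support_subset hQ₀
  refine hch.adj_of_isChordless_paths (A := {z | G.ReachableAvoiding S a z})
    (B := {z | G.ReachableAvoiding S b z}) (fun c hc d hd => ⟨?_, fun hcd => ?_⟩) hxy
    hP hQ hPc hQc hPA hQB
  · rintro rfl
    exact hS.prop.2.2 (hc.trans hd.symm)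
  · exact hS.prop.2.2 ((hc.of_adj hcd hd.right_notMem).trans hd.symm)

lemma isClique_neighborSet_of_induce {U : Set V} {v : U}
    (hv : (G.induce U).IsClique ((G.induce U).neighborSet v)) (hU : G.neighborSet v ⊆ U) :
    G.IsClique (G.neighborSet v) :=
  fun x hx y hy hxy => hv (x := ⟨x, hU hx⟩) (y := ⟨y, hU hy⟩) hx hy
    fun h => hxy (congrArg Subtype.val h)

/-- If `G` is not complete, take a minimal separator `S` of nonadjacent `a`, `b`. By induction,
the part of `a` together with the clique `S` contains a vertex simplicial in `G`, and so does the
part of `b`; these two vertices are nonadjacent, so they are not both in `K`. -/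
theorem _root_.IsChordal.exists_isClique_neighborSet_notMem [Finite V] (hch : IsChordal G)
    {K : Set V} (hK : G.IsClique K) (hKV : K ≠ Set.univ) :
    ∃ v ∉ K, G.IsClique (G.neighborSet v) := by
  induction hn : Nat.card V using Nat.strong_induction_on generalizing V with
  | _ n ih =>
    by_cases hcomplete : ∀ c d : V, c ≠ d → G.Adj c d
    · obtain ⟨v, hv⟩ := (Set.ne_univ_iff_exists_notMem K).mp hKV
      exact ⟨v, hv, fun x _ y _ hxy => hcomplete x y hxy⟩
    push Not at hcomplete
    obtain ⟨a, b, hab, hnadj⟩ := hcomplete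
    obtain ⟨S, hS⟩ := exists_minimal_isSeparator hab hnadj
    have hside : ∀ {c d : V}, Minimal (G.IsSeparator · c d) S →
        ∃ v, G.ReachableAvoiding S c v ∧ G.IsClique (G.neighborSet v) := by
      intro c d hS
      obtain ⟨hc, hd, hcd⟩ := hS.prop
      let U := {z | G.ReachableAvoiding S c z} ∪ S
      have hUV : U ≠ Set.univ := fun h => (h ▸ Set.mem_univ d).elim hcd hd
      have hSU : (G.induce U).IsClique (Subtype.val ⁻¹' S) := fun x hx y hy hxy =>
        hch.isClique_of_minimal_isSeparator hS hx hy (Subtype.coe_ne_coe.mpr hxy)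
      have hSU' : Subtype.val ⁻¹' S ≠ (Set.univ : Set U) := fun h =>
        hc (Set.eq_univ_iff_forall.mp h ⟨c, .inl (.refl hc)⟩)
      obtain ⟨v, hvS, hv⟩ := ih _ (hn ▸ Nat.card_coe_set_eq U ▸ Set.ncard_lt_card hUV)
        (hch.induce U) hSU hSU' rfl
      have hvc : G.ReachableAvoiding S c v := v.2.resolve_right hvS
      refine ⟨v, hvc, isClique_neighborSet_of_induce hv fun w hw => ?_⟩
      by_cases hwS : w ∈ S
      · exact .inr hwS
      · exact .inl (hvc.of_adj hw hwS)
    obtain ⟨v, hav, hv⟩ := hside hS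
    obtain ⟨u, hbu, hu⟩ := hside hS.isSeparator_symm
    by_cases hvK : v ∈ K
    · refine ⟨u, fun huK => ?_, hu⟩
      have hvu : v ≠ u := by
        rintro rfl
        exact hS.prop.2.2 (hav.trans hbu.symm)
      exact hS.prop.2.2 ((hav.of_adj (hK hvK huK hvu) hbu.right_notMem).trans hbu.symm)
    · exact ⟨v, hvK, hv⟩

structure IsPerfectEliminationOrder (G : SimpleGraph V) (pos : V → ℕ) : Prop where
  injective : Function.Injective pos
  isClique_laterNeighbors (v : V) : G.IsClique {x | G.Adj v x ∧ pos v < pos x}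

lemma IsPerfectEliminationOrder.extend [DecidableEq V] {v : V}
    (hv : G.IsClique (G.neighborSet v)) {pos : ({v}ᶜ : Set V) → ℕ}
    (hpos : (G.induce {v}ᶜ).IsPerfectEliminationOrder pos) :
    G.IsPerfectEliminationOrder fun w => if hw : w = v then 0 else pos ⟨w, hw⟩ + 1 := by
  constructor
  · intro x y hxy
    by_cases hx : x = v <;> by_cases hy : y = v
    · exact hx.trans hy.symm
    · simp [hx, hy] at hxy
    · simp [hx, hy] at hxy
    · simp only [hx, hy, dite_false, add_left_inj] at hxy
      exact congrArg Subtype.val (hpos.injective hxy)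
  · intro w
    by_cases hw : w = v
    · subst hw
      exact hv.subset fun x hx => hx.1
    intro x ⟨hwx, hlt⟩ y ⟨hwy, hlt'⟩ hxy
    have hx : x ≠ v := by
      rintro rfl
      simp at hlt
    have hy : y ≠ v := by
      rintro rfl
      simp at hlt'
    simp only [hw, hx, hy, dite_false, add_lt_add_iff_right] at hlt hlt'
    exact hpos.isClique_laterNeighbors ⟨w, hw⟩ (x := ⟨x, hx⟩) (y := ⟨y, hy⟩)
      ⟨hwx, hlt⟩ ⟨hwy, hlt'⟩ fun h => hxy (congrArg Subtype.val h)

/-- Eliminate first a simplicial vertex outside `K`. -/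
theorem _root_.IsChordal.exists_isPerfectEliminationOrder [Finite V] (hch : IsChordal G)
    {K : Set V} (hK : G.IsClique K) :
    ∃ pos, G.IsPerfectEliminationOrder pos ∧ ∀ v ∉ K, pos v < Nat.card V - K.ncard := by
  classical
  induction hn : Nat.card V using Nat.strong_induction_on generalizing V with
  | _ n ih =>
    by_cases hKV : K = Set.univ
    · subst hKV
      exact ⟨fun v => Finite.equivFin V v,
        ⟨fun x y h => (Finite.equivFin V).injective (Fin.ext h), fun _ x _ y _ hxy =>
          hK trivial trivial hxy⟩, fun v hv => absurd trivial hv⟩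
    obtain ⟨v, hvK, hv⟩ := hch.exists_isClique_neighborSet_notMem hK hKV
    have hcard : Nat.card ({v}ᶜ : Set V) + 1 = n := by
      rw [Nat.card_coe_set_eq, ← Set.ncard_singleton v, Set.ncard_compl_add_ncard, hn]
    have hKcard : (Subtype.val ⁻¹' K : Set ({v}ᶜ : Set V)).ncard = K.ncard :=
      Set.ncard_preimage_of_injective_subset_range Subtype.val_injective fun w hw =>
        ⟨⟨w, fun hwv => hvK (hwv ▸ hw)⟩, rfl⟩
    have hKn : K.ncard < n := hn ▸ Set.ncard_lt_card hKV
    obtain ⟨pos, hpos, hlt⟩ := ih _ (by omega) (hch.induce {v}ᶜ)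
      (K := Subtype.val ⁻¹' K) (fun x hx y hy hxy => hK hx hy (Subtype.coe_ne_coe.mpr hxy)) rfl
    refine ⟨_, hpos.extend hv, fun w hw => ?_⟩
    by_cases hwv : w = v
    · simp only [hwv, dite_true]
      omega
    · have := hlt ⟨w, hwv⟩ hw
      simp only [hwv, dite_false]
      omega

def eliminationColoring (pos : V → ℕ) (T : ℕ) : Sym2 V → ℕ :=
  Sym2.lift ⟨fun a b => if min (pos a) (pos b) < T then min (pos a) (pos b) + 1 else 0,
    fun a b => by simp only [min_comm]⟩

variable {pos : V → ℕ} {T : ℕ}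

@[simp]
lemma eliminationColoring_mk (a b : V) : eliminationColoring pos T s(a, b) =
    if min (pos a) (pos b) < T then min (pos a) (pos b) + 1 else 0 :=
  rfl

lemma eliminationColoring_le (e : Sym2 V) : eliminationColoring pos T e ≤ T := by
  induction e using Sym2.ind with
  | h a b =>
    rw [eliminationColoring_mk]
    split_ifs <;> omega

lemma IsPerfectEliminationOrder.adj_of_eliminationColoring_eq
    (hpos : G.IsPerfectEliminationOrder pos) (htop : G.IsClique {v | T ≤ pos v})
    {u u' a b : V} (huu' : G.Adj u u') (hab : G.Adj a b) (hua : u ≠ a) (hub : u ≠ b)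
    (hc : eliminationColoring pos T s(u, u') = eliminationColoring pos T s(a, b)) :
    G.Adj u a ∧ G.Adj u b := by
  wlog hle : pos a ≤ pos b generalizing a b
  · rw [Sym2.eq_swap (a := a)] at hc
    exact (this hab.symm hub hua hc (by omega)).symm
  have hlt : pos a < pos b := lt_of_le_of_ne hle (hpos.injective.ne hab.ne)
  simp only [eliminationColoring_mk, min_eq_left hle] at hc
  split_ifs at hc with huT haT haT'
  · have hmin : min (pos u) (pos u') = pos a := by omega
    rcases min_choice (pos u) (pos u') with h | h
    · exact absurd (hpos.injective (h ▸ hmin)) hua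
    · obtain rfl : u' = a := hpos.injective (h ▸ hmin)
      have hu'u : pos u' < pos u :=
        lt_of_le_of_ne (h ▸ min_le_left _ _) (hpos.injective.ne huu'.ne.symm)
      exact ⟨huu', hpos.isClique_laterNeighbors u' ⟨huu'.symm, hu'u⟩ ⟨hab, hlt⟩ hub⟩
  · have hu : T ≤ pos u := (not_lt.mp huT).trans (min_le_left _ _)
    have ha : T ≤ pos a := not_lt.mp haT'
    exact ⟨htop hu ha hua, htop hu (ha.trans hle) hub⟩

theorem IsPerfectEliminationOrder.nodup_map_eliminationColoring
    (hpos : G.IsPerfectEliminationOrder pos) (htop : G.IsClique {v | T ≤ pos v})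
    {u v : V} {p : G.Walk u v} (hp : p.IsPath) (hpc : p.IsChordless) :
    (p.edges.map (eliminationColoring pos T)).Nodup := by
  induction p with
  | nil => simp
  | cons h q ih =>
    have huq := ((Walk.cons_isPath_iff _ _).mp hp).2
    rw [Walk.edges_cons, List.map_cons, List.nodup_cons]
    refine ⟨fun hmem => ?_, ih hp.of_cons (hpc.of_cons hp)⟩
    obtain ⟨e, he, hce⟩ := List.mem_map.mp hmem
    induction e using Sym2.ind with
    | h a b =>
      have ha := q.fst_mem_support_of_mem_edges he
      have hb := q.snd_mem_support_of_mem_edges he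
      have hab := q.adj_of_mem_edges he
      obtain ⟨hua, hub⟩ := hpos.adj_of_eliminationColoring_eq htop h hab
        (fun h => huq (h ▸ ha)) (fun h => huq (h ▸ hb)) hce.symm
      exact hab.ne ((hpc.eq_of_adj_of_cons hp ha hua).trans (hpc.eq_of_adj_of_cons hp hb hub).symm)

end SimpleGraph

theorem stmt_4_general {V : Type*} [Fintype V] (G : SimpleGraph V)
    (hchordal : IsChordal G) :
    ∃ c : Sym2 V → ℕ, IsVSRC G c ∧
      ∀ e ∈ G.edgeSet, c e < Fintype.card V - G.cliqueNum + 1 := by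
  obtain ⟨K, hK⟩ := G.exists_isNClique_cliqueNum
  obtain ⟨pos, hpos, hKlast⟩ := hchordal.exists_isPerfectEliminationOrder hK.isClique
  have hT : Nat.card V - (K : Set V).ncard = Fintype.card V - G.cliqueNum := by
    rw [Nat.card_eq_fintype_card, Set.ncard_coe_finset, hK.card_eq]
  have htop : G.IsClique {v | Fintype.card V - G.cliqueNum ≤ pos v} :=
    hK.isClique.subset fun v hv => by_contra fun hvK => (hT ▸ hKlast v hvK).not_ge hv
  exact ⟨eliminationColoring pos _, fun _ _ p hp hlen =>
    hpos.nodup_map_eliminationColoring htop hp (p.isChordless_of_length_eq_dist hlen),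
    fun e _ => Nat.lt_succ_of_le (eliminationColoring_le e)⟩

theorem stmt_4 {V : Type*} [Fintype V] (G : SimpleGraph V)
    (hconn : G.Connected) (hchordal : IsChordal G) :
    ∃ c : Sym2 V → ℕ, IsVSRC G c ∧
      ∀ e ∈ G.edgeSet, c e < Fintype.card V - G.cliqueNum + 1 :=
  stmt_4_general G hchordal
end

section
/- For every finite simple graph G, the line graph L(G) satisfies vsrc(L(G)) ≤ |V(G)|. -/
/-!
Colour the line-graph edge `{e, f}` by the vertex of `G` shared by `e` and `f`. If two edges of
a shortest path `e₀ e₁ … eₖ` in `L(G)` had the same colour `a`, say the edge `e₀e₁` and a later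
edge `eᵢeᵢ₊₁`, then `e₀`, `eᵢ` and `eᵢ₊₁` would all contain `a`, so `e₀` would be adjacent to both
`eᵢ` and `eᵢ₊₁`. On a shortest path the first vertex is adjacent only to the second one, so
`eᵢ = e₁ = eᵢ₊₁`, which is absurd.
-/

open SimpleGraph

namespace SimpleGraph

variable {V : Type*} {G : SimpleGraph V}

lemma Walk.eq_of_adj_of_length_cons_eq_dist {u w v x : V} {h : G.Adj u w} {q : G.Walk w v}
    (hq : (q.cons h).length = G.dist u v) (hx : x ∈ q.support) (hux : G.Adj u x) : x = w := by
  classical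
  have hshortcut : G.dist u v ≤ (q.dropUntil x hx).length + 1 :=
    dist_le ((q.dropUntil x hx).cons hux)
  have hsplit := congr_arg Walk.length (q.take_spec hx)
  rw [Walk.length_append] at hsplit
  rw [Walk.length_cons] at hq
  exact (Walk.eq_of_length_eq_zero (p := q.takeUntil x hx) (by omega)).symm

variable (G)

noncomputable def lineGraphColoring (idx : V → ℕ) : Sym2 G.edgeSet → ℕ :=
  Sym2.lift ⟨fun e f => sInf (idx '' {v | v ∈ (e : Sym2 V) ∧ v ∈ (f : Sym2 V)}),
    fun e f => by simp only [and_comm]⟩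

variable {G}

lemma exists_mem_mem_idx_eq_lineGraphColoring (idx : V → ℕ) {e f : G.edgeSet}
    (h : G.lineGraph.Adj e f) :
    ∃ v, v ∈ (e : Sym2 V) ∧ v ∈ (f : Sym2 V) ∧ idx v = lineGraphColoring G idx s(e, f) := by
  obtain ⟨-, v, hve, hvf⟩ := lineGraph_adj_iff_exists.mp h
  obtain ⟨a, ⟨hae, haf⟩, ha⟩ := Nat.sInf_mem
    (Set.Nonempty.image idx (⟨v, hve, hvf⟩ : {v | v ∈ (e : Sym2 V) ∧ v ∈ (f : Sym2 V)}.Nonempty))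
  exact ⟨a, hae, haf, ha⟩

lemma isVSRC_lineGraphColoring {idx : V → ℕ} (hidx : Function.Injective idx) :
    IsVSRC G.lineGraph (lineGraphColoring G idx) := by
  intro u v p hpath hp
  induction p with
  | nil => simp
  | @cons u w v h q ih =>
    have hq : q.length = G.lineGraph.dist w v := length_eq_dist_of_subwalk hp (q.isSubwalk_cons h)
    obtain ⟨hqpath, hu⟩ := (Walk.cons_isPath_iff h q).mp hpath
    rw [Walk.edges_cons, List.map_cons, List.nodup_cons]
    refine ⟨fun hmem => ?_, ih hqpath hq⟩
    obtain ⟨⟨x, y⟩, he, hce⟩ := List.mem_map.mp hmem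
    obtain ⟨a, hau, -, ha⟩ := exists_mem_mem_idx_eq_lineGraphColoring idx h
    have hxy := q.adj_of_mem_edges he
    obtain ⟨b, hbx, hby, hb⟩ := exists_mem_mem_idx_eq_lineGraphColoring idx hxy
    obtain rfl : a = b := hidx (ha.trans (hce.symm ▸ hb.symm))
    have eq_w_of_contains_a : ∀ z ∈ q.support, a ∈ (z : Sym2 V) → z = w := fun z hz haz =>
      Walk.eq_of_adj_of_length_cons_eq_dist hp hz
        (lineGraph_adj_iff_exists.mpr ⟨fun huz => hu (huz ▸ hz), a, hau, haz⟩)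
    exact hxy.ne ((eq_w_of_contains_a x (q.fst_mem_support_of_mem_edges he) hbx).trans
      (eq_w_of_contains_a y (q.snd_mem_support_of_mem_edges he) hby).symm)

end SimpleGraph

theorem stmt_5 {V : Type*} [Fintype V] (G : SimpleGraph V) :
    ∃ c : Sym2 G.edgeSet → ℕ, IsVSRC G.lineGraph c ∧
      ∀ e ∈ G.lineGraph.edgeSet, c e < Fintype.card V := by
  have hidx : Function.Injective fun v => (Fintype.equivFin V v : ℕ) :=
    Fin.val_injective.comp (Fintype.equivFin V).injective
  refine ⟨lineGraphColoring G _, isVSRC_lineGraphColoring hidx, ?_⟩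
  rintro ⟨e, f⟩ he
  obtain ⟨a, -, -, ha⟩ := exists_mem_mem_idx_eq_lineGraphColoring _ he
  exact ha ▸ (Fintype.equivFin V a).isLt
end

section
/- Let G be a finite simple graph that is k-perfectly orientable: there exists an orientation of its edges (an assignment to each edge {u,v} of one of its endpoints as head) such that for every vertex v, the set of out-neighbors of v can be partitioned into at most k sets each inducing a clique in G. Then vsrc(G) ≤ k·|V(G)|. -/
/-!
Colour each edge by its tail together with the clique class of its head at the tail: at most
`|V| · k` colours. Two distinct edges of the same colour are then `wx` and `wy` with `x ~ y`. In a
path the two edges at `w` are consecutive, so a path through both contains `x, w, y`, which the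
edge `xy` shortcuts; hence no shortest path repeats a colour.
-/

open SimpleGraph

theorem Nat.eq_and_eq_of_mul_add_eq {k a b r s : ℕ} (hr : r < k) (hs : s < k)
    (h : k * a + r = k * b + s) : a = b ∧ r = s := by
  obtain rfl : a = b := by
    by_contra hne
    rcases Nat.lt_or_gt_of_ne hne with hab | hab <;> nlinarith
  omega

namespace List

variable {α : Type*} {l : List α}

theorem pair_infix_iff_getElem? {a b : α} :
    [a, b] <:+: l ↔ ∃ k, l[k]? = some a ∧ l[k + 1]? = some b := by
  rw [infix_iff_getElem?]
  constructor
  · rintro ⟨k, -, h⟩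
    exact ⟨k, by simpa using h 0 (by simp), by simpa [add_comm] using h 1 (by simp)⟩
  · rintro ⟨k, ha, hb⟩
    refine ⟨k, by grind, fun i hi => ?_⟩
    simp only [length_cons, length_nil] at hi
    interval_cases i <;> simp_all [add_comm]

theorem triple_infix_iff_getElem? {a b c : α} :
    [a, b, c] <:+: l ↔ ∃ k, l[k]? = some a ∧ l[k + 1]? = some b ∧ l[k + 2]? = some c := by
  rw [infix_iff_getElem?]
  constructor
  · rintro ⟨k, -, h⟩
    exact ⟨k, by simpa using h 0 (by simp), by simpa [add_comm] using h 1 (by simp),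
      by simpa [add_comm] using h 2 (by simp)⟩
  · rintro ⟨k, ha, hb, hc⟩
    refine ⟨k, by grind, fun i hi => ?_⟩
    simp only [length_cons, length_nil] at hi
    interval_cases i <;> simp_all [add_comm]

theorem Nodup.triple_infix_of_pair_infix {a w b : α} (hl : l.Nodup)
    (ha : [a, w] <:+: l ∨ [w, a] <:+: l) (hb : [w, b] <:+: l ∨ [b, w] <:+: l) (hab : a ≠ b) :
    [a, w, b] <:+: l ∨ [b, w, a] <:+: l := by
  have hinj : ∀ i j, i < l.length → l[i]? = l[j]? → i = j := fun i j hi h =>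
    (getElem?_inj hi hl).1 h
  simp only [pair_infix_iff_getElem?, triple_infix_iff_getElem?] at *
  grind

end List

namespace SimpleGraph

variable {V : Type*} {G : SimpleGraph V}

theorem Walk.not_adj_of_mem_edges_of_length_eq_dist {u v w x y : V} {p : G.Walk u v}
    (hp : p.length = G.dist u v) (hx : s(w, x) ∈ p.edges) (hy : s(w, y) ∈ p.edges)
    (hxy : x ≠ y) : ¬G.Adj x y := by
  have hxw : G.Adj x w := (p.adj_of_mem_edges hx).symm
  have hwy : G.Adj w y := p.adj_of_mem_edges hy
  let q : G.Walk x y := .cons hxw (.cons hwy .nil)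
  have hq : q.length = G.dist x y := by
    rw [← infix_support_iff_mem_edges, or_comm] at hx
    rw [← infix_support_iff_mem_edges] at hy
    rcases (p.isPath_of_length_eq_dist hp).support_nodup.triple_infix_of_pair_infix hx hy hxy
      with h | h
    · exact length_eq_dist_of_subwalk hp (isSubwalk_iff_support_isInfix.mpr h)
    · rw [dist_comm, ← q.length_reverse]
      exact length_eq_dist_of_subwalk hp (isSubwalk_iff_support_isInfix.mpr h)
  rw [← dist_eq_one_iff_adj, ← hq]
  simp [q]

theorem isVSRC_of_color_eq_imp_adj (c : Sym2 V → ℕ)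
    (h : ∀ e₁ ∈ G.edgeSet, ∀ e₂ ∈ G.edgeSet, e₁ ≠ e₂ → c e₁ = c e₂ →
      ∃ w x y, e₁ = s(w, x) ∧ e₂ = s(w, y) ∧ G.Adj x y) :
    IsVSRC G c := by
  intro u v p hpath hp
  refine hpath.isTrail.edges_nodup.map_on fun e₁ he₁ e₂ he₂ hc => ?_
  by_contra hne
  obtain ⟨w, x, y, rfl, rfl, hxy⟩ :=
    h e₁ (p.edges_subset_edgeSet he₁) e₂ (p.edges_subset_edgeSet he₂) hne hc
  exact p.not_adj_of_mem_edges_of_length_eq_dist hp he₁ he₂ hxy.ne hxy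

end SimpleGraph

section Orientation

variable {V : Type*} {G : SimpleGraph V} {D : Sym2 V → V} {e e₁ e₂ : Sym2 V}

open Classical in
/-- The endpoint of `e` other than its head `D e`; junk when `D e ∉ e`. -/
noncomputable def edgeTail (D : Sym2 V → V) (e : Sym2 V) : V :=
  if h : D e ∈ e then Sym2.Mem.other h else D e

theorem edgeTail_head (h : D e ∈ e) : s(edgeTail D e, D e) = e := by
  rw [edgeTail, dif_pos h, Sym2.eq_swap, Sym2.other_spec]

theorem adj_head_of_edgeTail_eq {f : V → V → ℕ} (hD : ∀ e ∈ G.edgeSet, D e ∈ e)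
    (hclique : ∀ (v : V) (i : ℕ), G.IsClique {u : V | G.Adj v u ∧ D s(v, u) = u ∧ f v u = i})
    (he₁ : e₁ ∈ G.edgeSet) (he₂ : e₂ ∈ G.edgeSet) (hne : e₁ ≠ e₂)
    (ht : edgeTail D e₁ = edgeTail D e₂)
    (hf : f (edgeTail D e₁) (D e₁) = f (edgeTail D e₂) (D e₂)) :
    G.Adj (D e₁) (D e₂) := by
  set w := edgeTail D e₁
  have h₁ : s(w, D e₁) = e₁ := edgeTail_head (hD e₁ he₁)
  have h₂ : s(w, D e₂) = e₂ := ht ▸ edgeTail_head (hD e₂ he₂)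
  have hadj₁ : G.Adj w (D e₁) := by rwa [← mem_edgeSet, h₁]
  have hadj₂ : G.Adj w (D e₂) := by rwa [← mem_edgeSet, h₂]
  refine hclique w (f w (D e₁)) ⟨hadj₁, by rw [h₁], rfl⟩ ⟨hadj₂, by rw [h₂], ht ▸ hf.symm⟩ ?_
  intro heq
  exact hne (h₁.symm.trans (heq ▸ h₂))

end Orientation

/-- If `G` is `k`-perfectly orientable — there is an orientation (a choice `D e ∈ e` of a head
for each edge `e`) such that the out-neighbors of every vertex can be partitioned into at most
`k` sets each inducing a clique — then `vsrc(G) ≤ k·|V(G)|`. Here `u` is an out-neighbor of `v`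
if `G.Adj v u` and the head of the edge `s(v,u)` is `u`; the partition of the out-neighborhood
of `v` is given by the color classes of `f v`. -/
theorem stmt_6 {V : Type*} [Fintype V] (G : SimpleGraph V) (k : ℕ)
    (D : Sym2 V → V) (hD : ∀ e ∈ G.edgeSet, D e ∈ e)
    (f : V → V → ℕ)
    (hfk : ∀ v u : V, G.Adj v u → D s(v, u) = u → f v u < k)
    (hclique : ∀ (v : V) (i : ℕ),
      G.IsClique {u : V | G.Adj v u ∧ D s(v, u) = u ∧ f v u = i}) :
    ∃ c : Sym2 V → ℕ, IsVSRC G c ∧ ∀ e ∈ G.edgeSet, c e < k * Fintype.card V := by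
  let idx : V → Fin (Fintype.card V) := Fintype.equivFin V
  have hclass : ∀ e ∈ G.edgeSet, f (edgeTail D e) (D e) < k := fun e he => by
    have h := edgeTail_head (hD e he)
    exact hfk _ _ (by rwa [← mem_edgeSet, h]) (by rw [h])
  refine ⟨fun e => k * idx (edgeTail D e) + f (edgeTail D e) (D e),
    isVSRC_of_color_eq_imp_adj _ fun e₁ he₁ e₂ he₂ hne hc => ?_, fun e he => ?_⟩
  · obtain ⟨hidx, hf⟩ := Nat.eq_and_eq_of_mul_add_eq (hclass e₁ he₁) (hclass e₂ he₂) hc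
    have ht : edgeTail D e₁ = edgeTail D e₂ :=
      (Fintype.equivFin V).injective (Fin.val_injective hidx)
    refine ⟨edgeTail D e₁, D e₁, D e₂, (edgeTail_head (hD e₁ he₁)).symm,
      ht ▸ (edgeTail_head (hD e₂ he₂)).symm, adj_head_of_edgeTail_eq hD hclique he₁ he₂ hne ht hf⟩
  · calc k * idx (edgeTail D e) + f (edgeTail D e) (D e)
        < k * (idx (edgeTail D e) + 1) := by rw [Nat.mul_succ]; have := hclass e he; omega
      _ ≤ k * Fintype.card V := Nat.mul_le_mul_left k (idx (edgeTail D e)).isLt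
end

section
/- Let G be a finite simple graph admitting a very strong rainbow coloring with at most k colors. Then G is k-perfectly groupable: for every vertex v, the neighborhood of v can be partitioned into at most k sets each inducing a clique in G. Equivalently, for any VSRC c and any vertex v, for each color the set of neighbors u of v with c({v,u}) equal to that color is a clique. -/
open SimpleGraph

section

variable {V : Type*} {G : SimpleGraph V} {u v w : V}

lemma SimpleGraph.dist_eq_two_of_adj_of_adj (huv : G.Adj u v) (hvw : G.Adj v w) (huw : u ≠ w)
    (hnadj : ¬G.Adj u w) : G.dist u w = 2 := by
  rw [dist, edist_eq_two_iff.mpr ⟨huw, hnadj, v, G.mem_commonNeighbors.mpr ⟨huv, hvw.symm⟩⟩]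
  rfl

/-- A path `u - v - w` with `u, w` distinct and non-adjacent is a shortest path. -/
lemma IsVSRC.color_ne_of_not_adj {c : Sym2 V → ℕ} (hc : IsVSRC G c) (huv : G.Adj u v)
    (hvw : G.Adj v w) (huw : u ≠ w) (hnadj : ¬G.Adj u w) : c s(u, v) ≠ c s(v, w) := by
  have hpath : (Walk.cons huv (Walk.cons hvw Walk.nil)).IsPath := by
    simp [Walk.cons_isPath_iff, huv.ne, hvw.ne, huw]
  simpa using hc u w _ hpath (dist_eq_two_of_adj_of_adj huv hvw huw hnadj).symm

lemma IsVSRC.isClique_adj_color_eq {c : Sym2 V → ℕ} (hc : IsVSRC G c) (v : V) (i : ℕ) :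
    G.IsClique {u : V | G.Adj v u ∧ c s(v, u) = i} := by
  rintro u ⟨hvu, rfl⟩ w ⟨hvw, hcw⟩ huw
  by_contra hnadj
  exact hc.color_ne_of_not_adj hvu.symm hvw huw hnadj (by rw [Sym2.eq_swap, hcw])

end

theorem stmt_7_general {V : Type*} (G : SimpleGraph V) (k : ℕ)
    (c : Sym2 V → ℕ) (hc : IsVSRC G c) (hk : ∀ e ∈ G.edgeSet, c e < k) :
    (∀ v : V, ∃ f : V → ℕ, (∀ u : V, G.Adj v u → f u < k) ∧
      ∀ i : ℕ, G.IsClique {u : V | G.Adj v u ∧ f u = i}) ∧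
    (∀ (v : V) (i : ℕ), G.IsClique {u : V | G.Adj v u ∧ c s(v, u) = i}) :=
  ⟨fun v => ⟨fun u => c s(v, u), fun _ hu => hk _ hu, hc.isClique_adj_color_eq v⟩,
    hc.isClique_adj_color_eq⟩

/-- If `G` admits a very strong rainbow coloring with at most `k` colors then `G` is
`k`-perfectly groupable: the neighborhood of every vertex can be partitioned into at most `k`
sets each inducing a clique.  Moreover, for any VSRC `c`, any vertex `v` and any color `i`,
the set of neighbors `u` of `v` with `c s(v,u) = i` is a clique. -/
theorem stmt_7 {V : Type*} [Fintype V] (G : SimpleGraph V) (k : ℕ)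
    (c : Sym2 V → ℕ) (hc : IsVSRC G c) (hk : ∀ e ∈ G.edgeSet, c e < k) :
    (∀ v : V, ∃ f : V → ℕ, (∀ u : V, G.Adj v u → f u < k) ∧
      ∀ i : ℕ, G.IsClique {u : V | G.Adj v u ∧ f u = i}) ∧
    (∀ (v : V) (i : ℕ), G.IsClique {u : V | G.Adj v u ∧ c s(v, u) = i}) :=
  stmt_7_general G k c hc hk
end

section
/- Let G be a finite connected simple graph admitting a very strong rainbow coloring with at most k colors, and suppose every clique of G has at most t vertices, where k ≥ 1 and t ≥ 2. Then every vertex of G has degree at most k·t, and |V(G)| ≤ (k·t)^k. -/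
/-!
Two neighbours `u, w` of `v` whose edges to `v` share a colour must be adjacent, since otherwise
`u v w` is a shortest path with a repeated colour. So each colour class at `v`, together with `v`,
is a clique, and `v` has degree at most `k (t - 1)`. A shortest path uses distinct colours, so the
diameter is at most `k`, and a connected graph of maximum degree `Δ` and radius `D` has at most
`(Δ + 1) ^ D` vertices, which here is at most `(k t) ^ k`.
-/

open SimpleGraph

open scoped Finset

namespace SimpleGraph

variable {V : Type*} {G : SimpleGraph V}

lemma exists_eq_or_adj_of_dist_le_succ {v u : V} {r : ℕ} (h : G.dist v u ≤ r + 1) :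
    ∃ w, G.dist v w ≤ r ∧ (w = u ∨ G.Adj w u) := by
  by_cases hr : G.dist v u ≤ r
  · exact ⟨u, hr, Or.inl rfl⟩
  rw [dist_comm] at h hr
  obtain ⟨p, hp⟩ := exists_walk_of_dist_ne_zero (by omega : G.dist u v ≠ 0)
  cases p with
  | nil => simp at hr
  | @cons _ w _ huw q =>
    refine ⟨w, ?_, Or.inr huw.symm⟩
    rw [dist_comm]
    have := G.dist_le q
    simp only [Walk.length_cons] at hp
    omega

variable [Fintype V] [DecidableRel G.Adj]

lemma Connected.card_dist_le_le_pow (hconn : G.Connected) {Δ : ℕ}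
    (hdeg : ∀ w, G.degree w ≤ Δ) (v : V) (r : ℕ) :
    #{u | G.dist v u ≤ r} ≤ (Δ + 1) ^ r := by
  classical
  induction r with
  | zero => simp [hconn.dist_eq_zero_iff, Finset.filter_eq]
  | succ r ih =>
    have hcover : ({u | G.dist v u ≤ r + 1} : Finset V) ⊆
        ({u | G.dist v u ≤ r} : Finset V).biUnion fun w => insert w (G.neighborFinset w) := by
      intro u hu
      obtain ⟨w, hw, hwu⟩ := exists_eq_or_adj_of_dist_le_succ (Finset.mem_filter.1 hu).2
      exact Finset.mem_biUnion.2 ⟨w, by simpa using hw, by simpa [eq_comm] using hwu⟩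
    calc #{u | G.dist v u ≤ r + 1}
        ≤ ∑ w ∈ {u | G.dist v u ≤ r}, #(insert w (G.neighborFinset w)) :=
          (Finset.card_le_card hcover).trans Finset.card_biUnion_le
      _ ≤ ∑ _w ∈ {u | G.dist v u ≤ r}, (Δ + 1) := Finset.sum_le_sum fun w _ =>
          (Finset.card_insert_le _ _).trans (by simpa using hdeg w)
      _ ≤ (Δ + 1) ^ (r + 1) := by
          rw [Finset.sum_const, smul_eq_mul, pow_succ]
          exact Nat.mul_le_mul_right _ ih

lemma Connected.card_le_pow_of_degree_le (hconn : G.Connected) {Δ D : ℕ}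
    (hdeg : ∀ w, G.degree w ≤ Δ) {v : V} (hdist : ∀ u, G.dist v u ≤ D) :
    Fintype.card V ≤ (Δ + 1) ^ D := by
  calc Fintype.card V = #{u | G.dist v u ≤ D} := by simp [hdist]
    _ ≤ (Δ + 1) ^ D := hconn.card_dist_le_le_pow hdeg v D

end SimpleGraph

namespace IsVSRC

variable {V : Type*} {G : SimpleGraph V} {c : Sym2 V → ℕ}

lemma nodup_of_length_eq_dist (hc : IsVSRC G c) {u v : V} (p : G.Walk u v)
    (hp : p.length = G.dist u v) : (p.edges.map c).Nodup :=
  hc u v p (p.isPath_of_length_eq_dist hp) hp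

lemma adj_of_color_eq (hc : IsVSRC G c) {v u w : V} (hvu : G.Adj v u) (hvw : G.Adj v w)
    (huw : u ≠ w) (hcol : c s(v, u) = c s(v, w)) : G.Adj u w := by
  by_contra hadj
  let p : G.Walk u w := .cons hvu.symm (.cons hvw .nil)
  have hlen : p.length = G.dist u w := by
    have hgt := p.reachable.one_lt_dist_of_ne_of_not_adj huw hadj
    have hle := G.dist_le p
    simp only [p, Walk.length_cons, Walk.length_nil] at hle ⊢
    omega
  have hnodup := hc.nodup_of_length_eq_dist p hlen
  simp [p, Sym2.eq_swap, hcol] at hnodup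

lemma dist_le (hc : IsVSRC G c) {k : ℕ} (hck : ∀ e ∈ G.edgeSet, c e < k) {u v : V}
    (huv : G.Reachable u v) : G.dist u v ≤ k := by
  obtain ⟨p, hp⟩ := huv.exists_walk_length_eq_dist
  have hsub : p.edges.map c ⊆ List.range k := by
    intro i hi
    obtain ⟨e, he, rfl⟩ := List.mem_map.1 hi
    exact List.mem_range.2 (hck e (p.edges_subset_edgeSet he))
  simpa [hp] using ((hc.nodup_of_length_eq_dist p hp).subperm hsub).length_le

variable [Fintype V] [DecidableRel G.Adj]

lemma card_colorClass_le (hc : IsVSRC G c) {t : ℕ}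
    (hclique : ∀ s : Finset V, G.IsClique (s : Set V) → s.card ≤ t) (v : V) (i : ℕ) :
    #{u ∈ G.neighborFinset v | c s(v, u) = i} ≤ t - 1 := by
  classical
  set S : Finset V := {u ∈ G.neighborFinset v | c s(v, u) = i}
  have hS : ∀ u ∈ S, G.Adj v u ∧ c s(v, u) = i := by simp [S]
  have hclq : G.IsClique (insert v S : Finset V) := by
    rw [Finset.coe_insert]
    refine IsClique.insert (fun u hu w hw huw => ?_) fun u hu _ => (hS u hu).1
    exact hc.adj_of_color_eq (hS u hu).1 (hS w hw).1 huw ((hS u hu).2.trans (hS w hw).2.symm)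
  have hv : v ∉ S := fun hv => (hS v hv).1.ne rfl
  have := hclique _ hclq
  rw [Finset.card_insert_of_notMem hv] at this
  omega

lemma degree_le (hc : IsVSRC G c) {k t : ℕ} (hck : ∀ e ∈ G.edgeSet, c e < k)
    (hclique : ∀ s : Finset V, G.IsClique (s : Set V) → s.card ≤ t) (v : V) :
    G.degree v ≤ k * (t - 1) := by
  rw [← card_neighborFinset_eq_degree, mul_comm]
  simpa using Finset.card_le_mul_card_image_of_maps_to (t := Finset.range k)
    (fun u hu => Finset.mem_range.2 (hck s(v, u) ((mem_neighborFinset G v u).1 hu)))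
    (t - 1) fun i _ => hc.card_colorClass_le hclique v i

end IsVSRC

theorem stmt_10_general {V : Type*} [Fintype V] (G : SimpleGraph V)
    [DecidableRel G.Adj] (hconn : G.Connected) (k t : ℕ) (hk : 1 ≤ k) (ht : 2 ≤ t)
    (c : Sym2 V → ℕ) (hc : IsVSRC G c) (hck : ∀ e ∈ G.edgeSet, c e < k)
    (hclique : ∀ s : Finset V, G.IsClique (s : Set V) → s.card ≤ t) :
    (∀ v : V, G.degree v ≤ k * t) ∧ Fintype.card V ≤ (k * t) ^ k := by
  have hdeg : ∀ v, G.degree v ≤ k * (t - 1) := hc.degree_le hck hclique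
  refine ⟨fun v => (hdeg v).trans (Nat.mul_le_mul_left k (Nat.sub_le t 1)), ?_⟩
  obtain ⟨v⟩ := hconn.nonempty
  have hbase : k * (t - 1) + 1 ≤ k * t := by
    obtain ⟨s, rfl⟩ : ∃ s, t = s + 1 := ⟨t - 1, by omega⟩
    rw [Nat.add_sub_cancel, Nat.mul_add_one]
    omega
  calc Fintype.card V ≤ (k * (t - 1) + 1) ^ k :=
        hconn.card_le_pow_of_degree_le hdeg fun u => hc.dist_le hck (hconn v u)
    _ ≤ (k * t) ^ k := Nat.pow_le_pow_left hbase k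

theorem stmt_10 {V : Type*} [Fintype V] [DecidableEq V] (G : SimpleGraph V)
    [DecidableRel G.Adj] (hconn : G.Connected) (k t : ℕ) (hk : 1 ≤ k) (ht : 2 ≤ t)
    (c : Sym2 V → ℕ) (hc : IsVSRC G c) (hck : ∀ e ∈ G.edgeSet, c e < k)
    (hclique : ∀ s : Finset V, G.IsClique (s : Set V) → s.card ≤ t) :
    (∀ v : V, G.degree v ≤ k * t) ∧ Fintype.card V ≤ (k * t) ^ k :=
  stmt_10_general G hconn k t hk ht c hc hck hclique
end

section
/- Let G be a finite connected simple graph, let c be a very strong rainbow coloring of G, and let e1 and e2 be two distinct bridges of G. Then c(e1) ≠ c(e2). In other words, any VSRC of a connected graph assigns pairwise distinct colors to the bridges. -/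
/-!
Let `e₁ ≠ e₂` be bridges. Deleting `e₁` leaves the endpoints of `e₂` in one component, which
misses an endpoint `a` of `e₁`; deleting `e₂` then separates `a` from an endpoint `b` of `e₂`.
Every walk from `a` to `b`, in particular a shortest path, therefore crosses both bridges, and a
very strong rainbow coloring gives the edges of a shortest path distinct colors.
-/

open SimpleGraph

namespace SimpleGraph

variable {V : Type*} {G : SimpleGraph V}

theorem IsBridge.mem_edgeSet {e : Sym2 V} (hG : G.Preconnected) (h : G.IsBridge e) :
    e ∈ G.edgeSet := by
  induction e using Sym2.ind with
  | _ u v => exact h.reachable_iff_adj.mp (hG u v)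

theorem IsBridge.exists_mem_not_reachable {e : Sym2 V} (h : G.IsBridge e) (w : V) :
    ∃ a ∈ e, ¬ (G.deleteEdges {e}).Reachable a w := by
  induction e using Sym2.ind with
  | _ u v =>
    by_cases hu : (G.deleteEdges {s(u, v)}).Reachable u w
    · exact ⟨v, Sym2.mem_mk_right u v, fun hv ↦ isBridge_iff.mp h (hu.trans hv.symm)⟩
    · exact ⟨u, Sym2.mem_mk_left u v, hu⟩

theorem exists_forall_walk_mem_edges_of_isBridge {e₁ e₂ : Sym2 V} (h₁ : G.IsBridge e₁)
    (h₂ : G.IsBridge e₂) (he₂ : e₂ ∈ G.edgeSet) (hne : e₁ ≠ e₂) :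
    ∃ a b : V, ∀ p : G.Walk a b, e₁ ∈ p.edges ∧ e₂ ∈ p.edges := by
  induction e₂ using Sym2.ind with
  | _ u v =>
    obtain ⟨a, -, hau⟩ := h₁.exists_mem_not_reachable u
    obtain ⟨b, hb, hba⟩ := h₂.exists_mem_not_reachable a
    have hub : (G.deleteEdges {e₁}).Reachable u b := by
      have huv : (G.deleteEdges {e₁}).Adj u v :=
        deleteEdges_adj.mpr ⟨he₂, fun h ↦ hne (Set.mem_singleton_iff.mp h).symm⟩
      rcases Sym2.mem_iff.mp hb with rfl | rfl
      exacts [Reachable.refl _, huv.reachable]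
    refine ⟨a, b, fun p ↦ ⟨?_, ?_⟩⟩
    · exact p.mem_edges_of_not_reachable_deleteEdges fun hab ↦ hau (hab.trans hub.symm)
    · exact p.mem_edges_of_not_reachable_deleteEdges fun hab ↦ hba hab.symm

end SimpleGraph

theorem IsVSRC.ne_of_forall_walk_mem_edges {V : Type*} {G : SimpleGraph V} {c : Sym2 V → ℕ}
    (hc : IsVSRC G c) {a b : V} (hab : G.Reachable a b) {e₁ e₂ : Sym2 V}
    (h : ∀ p : G.Walk a b, e₁ ∈ p.edges ∧ e₂ ∈ p.edges) (hne : e₁ ≠ e₂) : c e₁ ≠ c e₂ := by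
  obtain ⟨p, hp, hlen⟩ := hab.exists_path_of_dist
  exact fun hce ↦ hne (List.inj_on_of_nodup_map (hc a b p hp hlen) (h p).1 (h p).2 hce)

theorem stmt_12_general {V : Type*} (G : SimpleGraph V) (hconn : G.Connected)
    (c : Sym2 V → ℕ) (hc : IsVSRC G c) (e₁ e₂ : Sym2 V)
    (h₁ : G.IsBridge e₁) (h₂ : G.IsBridge e₂) (hne : e₁ ≠ e₂) :
    c e₁ ≠ c e₂ := by
  obtain ⟨a, b, h⟩ :=
    exists_forall_walk_mem_edges_of_isBridge h₁ h₂ (h₂.mem_edgeSet hconn.preconnected) hne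
  exact hc.ne_of_forall_walk_mem_edges (hconn a b) h hne

theorem stmt_12 {V : Type*} [Fintype V] (G : SimpleGraph V) (hconn : G.Connected)
    (c : Sym2 V → ℕ) (hc : IsVSRC G c) (e₁ e₂ : Sym2 V)
    (h₁ : G.IsBridge e₁) (h₂ : G.IsBridge e₂) (hne : e₁ ≠ e₂) :
    c e₁ ≠ c e₂ :=
  stmt_12_general G hconn c hc e₁ e₂ h₁ h₂ hne
end

section
/- Let G be a finite connected cactus graph and let C be a cycle in G. For each vertex v of C, let S(v,C) be the set of vertices reachable from v in the graph obtained from G by deleting all edges of C. Then the sets S(v,C) over all vertices v of C form a partition of the vertex set of G: every vertex of G belongs to S(v,C) for exactly one vertex v of C. -/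
open SimpleGraph

/-- A cactus graph: every edge belongs to at most one cycle, i.e. any two cycles sharing an
edge have the same edge set. -/
def IsCactus {V : Type*} (G : SimpleGraph V) : Prop :=
  ∀ (u v : V) (p : G.Walk u u) (q : G.Walk v v), p.IsCycle → q.IsCycle →
    (∃ e, e ∈ p.edges ∧ e ∈ q.edges) → ∀ e, e ∈ p.edges ↔ e ∈ q.edges

/-!
Every vertex `x` lies in some `S(v, C)`: follow a walk from `C` to `x` and, each time it uses
an edge of `C`, restart from that edge's endpoint on `C`.

For uniqueness, suppose two distinct vertices of `C` are joined by a path `p` avoiding the edges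
of `C`; shortening it, we may assume `p` meets `C` only at its ends. Closing `p` up with an arc
of `C` gives a cycle sharing an edge with `C`, so by the cactus property it has the same edges
as `C`, which is absurd since the edges of `p` are not edges of `C`.
-/

section

variable {V : Type*} {G : SimpleGraph V}

namespace SimpleGraph.Walk

lemma IsPath.start_notMem_support_tail {u v : V} {p : G.Walk u v} (hp : p.IsPath) :
    u ∉ p.support.tail := by
  have := hp.support_nodup
  rw [← cons_tail_support] at this
  exact (List.nodup_cons.mp this).1

lemma IsPath.isCycle_append_of_disjoint_edges {u v : V} {p : G.Walk u v} {q : G.Walk v u}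
    (hp : p.IsPath) (hq : q.IsPath) (hsupp : p.support.tail.Disjoint q.support.tail)
    (hedges : p.edges.Disjoint q.edges) (huv : u ≠ v) : (p.append q).IsCycle := by
  rw [isCycle_def, isTrail_append, tail_support_append, List.nodup_append']
  refine ⟨⟨hp.isTrail, hq.isTrail, hedges⟩, fun h => huv ?_,
    hp.support_nodup.tail, hq.support_nodup.tail, hsupp⟩
  have hlen := congrArg length h
  rw [length_append, length_nil, Nat.add_eq_zero_iff] at hlen
  exact eq_of_length_eq_zero hlen.1

lemma IsCycle.exists_isPath_subset {w a b : V} {C : G.Walk w w} (hC : C.IsCycle)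
    (ha : a ∈ C.support) (hb : b ∈ C.support) :
    ∃ r : G.Walk a b, r.IsPath ∧ r.edges ⊆ C.edges ∧ r.support ⊆ C.support := by
  classical
  have hb' : b ∈ (C.rotate a ha).support := (C.mem_support_rotate_iff a ha).mpr hb
  refine ⟨(C.rotate a ha).takeUntil b hb', (hC.rotate ha).isPath_takeUntil hb',
    fun e he => ?_, fun x hx => ?_⟩
  · exact (C.rotate_edges a ha).mem_iff.mp ((C.rotate a ha).edges_takeUntil_subset_edges hb' he)
  · exact (C.mem_support_rotate_iff a ha).mp
      ((C.rotate a ha).support_takeUntil_subset_support hb' hx)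

lemma exists_mem_support_reachable_deleteEdges {u v a x : V} (C : G.Walk u v)
    (q : G.Walk a x) (ha : ∃ y ∈ C.support, (G.deleteEdges {e | e ∈ C.edges}).Reachable y a) :
    ∃ y ∈ C.support, (G.deleteEdges {e | e ∈ C.edges}).Reachable y x := by
  induction q with
  | nil => exact ha
  | @cons a c _ hac _ ih =>
    obtain ⟨y, hy, hya⟩ := ha
    refine ih ?_
    by_cases he : s(a, c) ∈ C.edges
    · exact ⟨c, C.snd_mem_support_of_mem_edges he, .refl c⟩
    · exact ⟨y, hy, hya.trans (deleteEdges_adj.mpr ⟨hac, he⟩).reachable⟩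

end SimpleGraph.Walk

open SimpleGraph.Walk

variable {w : V} {C : G.Walk w w}

lemma IsCactus.eq_of_isPath_deleteEdges_of_support_inter (hcactus : IsCactus G)
    (hC : C.IsCycle) {a b : V} {p : (G.deleteEdges {e | e ∈ C.edges}).Walk a b} (hp : p.IsPath)
    (ha : a ∈ C.support) (hb : b ∈ C.support)
    (hinter : ∀ x ∈ p.support, x ∈ C.support → x = a ∨ x = b) : a = b := by
  by_contra hab
  obtain ⟨r, hr, hrC, hrCsupp⟩ := hC.exists_isPath_subset hb ha
  have hpE : ∀ e ∈ p.edges, e ∈ G.edgeSet \ {e | e ∈ C.edges} := fun e he =>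
    edgeSet_deleteEdges _ ▸ p.edges_subset_edgeSet he
  have hpC : ∀ e ∈ p.edges, e ∉ C.edges := fun e he => (hpE e he).2
  let q := p.transfer G fun e he => (hpE e he).1
  have hcycle : (q.append r).IsCycle := by
    refine (hp.transfer _).isCycle_append_of_disjoint_edges hr ?_ ?_ hab
    · rw [support_transfer]
      intro x hxp hxr
      rcases hinter x (List.mem_of_mem_tail hxp) (hrCsupp (List.mem_of_mem_tail hxr))
        with rfl | rfl
      · exact hp.start_notMem_support_tail hxp
      · exact hr.start_notMem_support_tail hxr
    · rw [edges_transfer]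
      exact fun e hep her => hpC e hep (hrC her)
  obtain ⟨e, her⟩ :=
    List.exists_mem_of_ne_nil r.edges (edges_eq_nil.not.mpr (not_nil_of_ne (Ne.symm hab)))
  obtain ⟨f, hfp⟩ :=
    List.exists_mem_of_ne_nil p.edges (edges_eq_nil.not.mpr (not_nil_of_ne hab))
  have hshare : ∃ e, e ∈ (q.append r).edges ∧ e ∈ C.edges :=
    ⟨e, by simp [edges_append, her], hrC her⟩
  refine hpC f hfp ((hcactus a w _ C hcycle hC hshare f).mp ?_)
  simp [q, edges_append, edges_transfer, hfp]

lemma IsCactus.eq_of_isPath_deleteEdges (hcactus : IsCactus G) (hC : C.IsCycle) {a b : V}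
    (p : (G.deleteEdges {e | e ∈ C.edges}).Walk a b) (hp : p.IsPath) (ha : a ∈ C.support)
    (hb : b ∈ C.support) : a = b := by
  classical
  induction hn : p.length using Nat.strong_induction_on generalizing b with
  | _ n ih =>
  by_contra hab
  refine hab (hcactus.eq_of_isPath_deleteEdges_of_support_inter hC hp ha hb fun x hxp hxC => ?_)
  by_contra! hx
  exact hx.1 (ih _ (hn ▸ length_takeUntil_lt_length hxp hx.2) (p.takeUntil x hxp)
    (hp.takeUntil hxp) hxC rfl).symm

lemma IsCactus.eq_of_reachable_deleteEdges (hcactus : IsCactus G) (hC : C.IsCycle) {a b : V}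
    (ha : a ∈ C.support) (hb : b ∈ C.support)
    (hab : (G.deleteEdges {e | e ∈ C.edges}).Reachable a b) : a = b := by
  classical
  obtain ⟨p⟩ := hab
  exact hcactus.eq_of_isPath_deleteEdges hC p.toPath.1 p.toPath.2 ha hb

end

theorem stmt_13_general {V : Type*} (G : SimpleGraph V)
    (hconn : G.Connected) (hcactus : IsCactus G)
    (w : V) (C : G.Walk w w) (hC : C.IsCycle) :
    ∀ x : V, ∃! v : V, v ∈ C.support ∧
      (G.deleteEdges {e | e ∈ C.edges}).Reachable v x := by
  intro x
  obtain ⟨v, hv, hvx⟩ := C.exists_mem_support_reachable_deleteEdges (hconn w x).some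
    ⟨w, C.start_mem_support, .refl w⟩
  exact ⟨v, ⟨hv, hvx⟩, fun y ⟨hy, hyx⟩ =>
    hcactus.eq_of_reachable_deleteEdges hC hy hv (hyx.trans hvx.symm)⟩

theorem stmt_13 {V : Type*} [Fintype V] (G : SimpleGraph V)
    (hconn : G.Connected) (hcactus : IsCactus G)
    (w : V) (C : G.Walk w w) (hC : C.IsCycle) :
    ∀ x : V, ∃! v : V, v ∈ C.support ∧
      (G.deleteEdges {e | e ∈ C.edges}).Reachable v x :=
  stmt_13_general G hconn hcactus w C hC
end

section
/- Let G be a finite connected cactus graph, let C be a cycle in G, and let u be a vertex of G. Then there exists a unique vertex g on C, namely g = g(u,C), such that every path in G from u to any vertex of C passes through g. -/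
/-!
Follow a walk from `u` to `C` only up to its first vertex on `C`. If two such walks stopped at
different vertices `g ≠ x`, splicing them would give a path from `g` to `x` that uses no edge of
`C` and meets `C` only in `g` and `x`; closed up by an arc of `C` it is a cycle sharing an edge
with `C` without having the same edges, which a cactus forbids. Hence all first vertices on `C`
are one vertex `g`, which then lies on every walk from `u` to `C`. A path to `g` that meets `C`
only in `g` shows that no other vertex of `C` has this property.
-/

open SimpleGraph

namespace SimpleGraph.Walk

variable {V : Type*} {G : SimpleGraph V}

lemma edges_eq_singleton_of_length_eq_one {u v : V} {p : G.Walk u v} (h : p.length = 1) :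
    p.edges = [s(u, v)] := by
  cases p with
  | nil => simp at h
  | cons _ q =>
    cases q with
    | nil => rfl
    | cons _ _ => simp at h

lemma exists_walk_meeting_set_only_at_end (S : Set V) {u x : V} (q : G.Walk u x) (hx : x ∈ S) :
    ∃ g ∈ S, ∃ p : G.Walk u g, (∀ z ∈ p.support, z ∈ S → z = g) ∧ p.support ⊆ q.support := by
  induction q with
  | nil => exact ⟨_, hx, nil, by simp, by simp⟩
  | @cons u v x h q ih =>
    by_cases hu : u ∈ S
    · exact ⟨u, hu, nil, by simp, by simp⟩
    obtain ⟨g, hg, p, hpS, hpq⟩ := ih hx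
    refine ⟨g, hg, cons h p, ?_, ?_⟩
    · simp only [support_cons, List.mem_cons, forall_eq_or_imp]
      exact ⟨fun hu' => absurd hu' hu, hpS⟩
    · simpa using List.cons_subset_cons u hpq

lemma disjoint_edges_of_forall_mem_support_eq {u v w w' g : V} {p : G.Walk u v}
    {c : G.Walk w w'} (h : ∀ z ∈ p.support, z ∈ c.support → z = g) :
    p.edges.Disjoint c.edges := by
  intro e hep hec
  induction e using Sym2.ind with
  | _ a b =>
    have hab : a = b :=
      (h a (p.fst_mem_support_of_mem_edges hep) (c.fst_mem_support_of_mem_edges hec)).trans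
        (h b (p.snd_mem_support_of_mem_edges hep) (c.snd_mem_support_of_mem_edges hec)).symm
    exact (p.adj_of_mem_edges hep).ne hab

end SimpleGraph.Walk

open SimpleGraph.Walk

namespace IsCactus

variable {V : Type*} {G : SimpleGraph V}

theorem eq_of_isPath_between_cycle_vertices [DecidableEq V] (hG : IsCactus G) {w g x : V}
    {C : G.Walk w w} (hC : C.IsCycle) (hg : g ∈ C.support) (hx : x ∈ C.support)
    {P : G.Walk g x} (hP : P.IsPath) (hPC : P.edges.Disjoint C.edges)
    (hPS : ∀ z ∈ P.support, z ∈ C.support → z = g ∨ z = x) : g = x := by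
  by_contra hgx
  have hg' : g ∈ (C.rotate x hx).support := (mem_support_rotate_iff C x hx).mpr hg
  set A := (C.rotate x hx).takeUntil g hg'
  have hA : A.IsPath := (hC.rotate hx).isPath_takeUntil hg'
  have hAC : A.edges ⊆ C.edges := fun e he =>
    (C.rotate_edges x hx).mem_iff.mp (edges_takeUntil_subset_edges _ _ he)
  have hAS : A.support ⊆ C.support := fun z hz =>
    (mem_support_rotate_iff C x hx).mp (support_takeUntil_subset_support _ _ hz)
  have hPlen : P.length ≠ 0 := fun h => hgx (eq_of_length_eq_zero h)
  have hAlen : A.length ≠ 0 := fun h => hgx (eq_of_length_eq_zero h).symm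
  have hlen : 1 < P.length ∨ 1 < A.length := by
    by_contra! h
    have hP1 := edges_eq_singleton_of_length_eq_one (p := P) (by omega)
    have hA1 := edges_eq_singleton_of_length_eq_one (p := A) (by omega)
    exact hPC (a := s(g, x)) (by simp [hP1]) (hAC (by simp [hA1, Sym2.eq_swap]))
  have hD : (P.append A).IsCycle := by
    refine hP.isCycle_append hA (fun z hzP hzA => ?_) hlen
    rcases hPS z (List.mem_of_mem_tail hzP) (hAS (List.mem_of_mem_tail hzA)) with rfl | rfl
    · exact (List.nodup_cons.mp (P.cons_tail_support ▸ hP.support_nodup)).1 hzP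
    · exact (List.nodup_cons.mp (A.cons_tail_support ▸ hA.support_nodup)).1 hzA
  obtain ⟨eA, heA⟩ := List.exists_mem_of_ne_nil A.edges (by simpa using hAlen)
  obtain ⟨eP, heP⟩ := List.exists_mem_of_ne_nil P.edges (by simpa using hPlen)
  have hsame := hG g w (P.append A) C hD hC ⟨eA, by simp [heA], hAC heA⟩
  exact hPC heP ((hsame eP).mp (by simp [heP]))

theorem eq_of_walks_meeting_cycle_only_at_end (hG : IsCactus G) {w u g x : V}
    {C : G.Walk w w} (hC : C.IsCycle) (hg : g ∈ C.support) (hx : x ∈ C.support)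
    {p : G.Walk u g} (hp : ∀ z ∈ p.support, z ∈ C.support → z = g)
    {q : G.Walk u x} (hq : ∀ z ∈ q.support, z ∈ C.support → z = x) : g = x := by
  classical
  refine hG.eq_of_isPath_between_cycle_vertices hC hg hx
    (bypass_isPath (p.reverse.append q)) ?_ ?_
  · intro e heP heC
    have := edges_bypass_subset_edges _ heP
    simp only [edges_append, edges_reverse, List.mem_append, List.mem_reverse] at this
    exact this.elim (disjoint_edges_of_forall_mem_support_eq hp · heC)
      (disjoint_edges_of_forall_mem_support_eq hq · heC)
  · intro z hzP hzC
    have := support_bypass_subset_support _ hzP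
    simp only [mem_support_append_iff, support_reverse, List.mem_reverse] at this
    exact this.imp (hp z · hzC) (hq z · hzC)

end IsCactus

theorem stmt_14_general {V : Type*} (G : SimpleGraph V)
    (hconn : G.Connected) (hcactus : IsCactus G)
    (w : V) (C : G.Walk w w) (hC : C.IsCycle) (u : V) :
    ∃! g : V, g ∈ C.support ∧
      ∀ x : V, x ∈ C.support → ∀ q : G.Walk u x, q.IsPath → g ∈ q.support := by
  obtain ⟨r⟩ := hconn.preconnected u w
  obtain ⟨g, hg, p, hpC, -⟩ :=
    exists_walk_meeting_set_only_at_end {z | z ∈ C.support} r C.start_mem_support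
  have gate : ∀ x ∈ C.support, ∀ q : G.Walk u x, g ∈ q.support := by
    intro x hx q
    obtain ⟨x', hx', q', hq'C, hq'q⟩ :=
      exists_walk_meeting_set_only_at_end {z | z ∈ C.support} q hx
    obtain rfl := hcactus.eq_of_walks_meeting_cycle_only_at_end hC hg hx' hpC hq'C
    exact hq'q q'.end_mem_support
  refine ⟨g, ⟨hg, fun x hx q _ => gate x hx q⟩, fun g' ⟨hg', hg'gate⟩ => ?_⟩
  classical
  exact hpC g' (support_bypass_subset_support p (hg'gate g hg p.bypass (bypass_isPath p))) hg'

theorem stmt_14 {V : Type*} [Fintype V] (G : SimpleGraph V)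
    (hconn : G.Connected) (hcactus : IsCactus G)
    (w : V) (C : G.Walk w w) (hC : C.IsCycle) (u : V) :
    ∃! g : V, g ∈ C.support ∧
      ∀ x : V, x ∈ C.support → ∀ q : G.Walk u x, q.IsPath → g ∈ q.support :=
  stmt_14_general G hconn hcactus w C hC u
end

section
/- Let G be a finite connected cactus graph, let C be a cycle of even length in G, and let uv be an edge of C. Then for every vertex x of G, either there is a path from x to u of length dist(x,u) that contains the edge uv, or there is a path from x to v of length dist(x,v) that contains the edge uv. -/
/-!
If `dist(x,u) ≠ dist(x,v)`, the two distances differ by one, and a shortest path to the nearer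
endpoint followed by the edge `uv` is a shortest path to the farther one. If
`dist(x,u) = dist(x,v)`, take shortest paths from `x` to `u` and to `v` and let `y` be a common
vertex farthest from `x`: beyond `y` the two paths are disjoint and of equal length, so together
with `uv` they close an odd cycle through `uv`. In a cactus this cycle has the edge set of `C`,
hence its length, contradicting the evenness of `C`.
-/

open SimpleGraph

namespace SimpleGraph

variable {V : Type*} {G : SimpleGraph V}

namespace Walk

section Geodesic

variable [DecidableEq V] {x u y : V}

lemma length_takeUntil_add_length_dropUntil (p : G.Walk x u) (hy : y ∈ p.support) :
    (p.takeUntil y hy).length + (p.dropUntil y hy).length = p.length := by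
  rw [← length_append, take_spec]

lemma length_takeUntil_eq_dist (p : G.Walk x u) (hp : p.length = G.dist x u)
    (hy : y ∈ p.support) : (p.takeUntil y hy).length = G.dist x y := by
  have := (p.takeUntil y hy).reachable.dist_triangle_left u
  have := p.length_takeUntil_add_length_dropUntil hy
  have := G.dist_le (p.takeUntil y hy)
  have := G.dist_le (p.dropUntil y hy)
  omega

lemma length_dropUntil_eq_dist (p : G.Walk x u) (hp : p.length = G.dist x u)
    (hy : y ∈ p.support) : (p.dropUntil y hy).length = G.dist y u := by
  have := (p.takeUntil y hy).reachable.dist_triangle_left u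
  have := p.length_takeUntil_add_length_dropUntil hy
  have := G.dist_le (p.takeUntil y hy)
  have := G.dist_le (p.dropUntil y hy)
  omega

lemma dist_add_dist_of_mem_support (p : G.Walk x u) (hp : p.length = G.dist x u)
    (hy : y ∈ p.support) : G.dist x y + G.dist y u = G.dist x u := by
  rw [← p.length_takeUntil_eq_dist hp hy, ← p.length_dropUntil_eq_dist hp hy,
    length_takeUntil_add_length_dropUntil, hp]

lemma eq_of_mem_support_of_dist_eq (p : G.Walk x u) (hp : p.length = G.dist x u)
    (hy : y ∈ p.support) (h : G.dist x y = G.dist x u) : y = u := by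
  have := p.dist_add_dist_of_mem_support hp hy
  exact (p.dropUntil y hy).reachable.dist_eq_zero_iff.mp (by omega)

lemma exists_last_common_vertex {v : V} (p : G.Walk x u) (q : G.Walk x v)
    (hp : p.length = G.dist x u) :
    ∃ y, ∃ (hyp : y ∈ p.support) (hyq : y ∈ q.support),
      ∀ z ∈ (p.dropUntil y hyp).support, z ∈ (q.dropUntil y hyq).support → z = y := by
  set S := p.support.toFinset ∩ q.support.toFinset
  have hxS : x ∈ S := by simp [S]
  obtain ⟨y, hyS, hymax⟩ := S.exists_max_image (G.dist x) ⟨x, hxS⟩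
  have hyp : y ∈ p.support := by simpa using (Finset.mem_inter.mp hyS).1
  have hyq : y ∈ q.support := by simpa using (Finset.mem_inter.mp hyS).2
  refine ⟨y, hyp, hyq, fun z hzp hzq => ?_⟩
  have hzS : z ∈ S := by
    simp [S, support_dropUntil_subset_support _ hyp hzp,
      support_dropUntil_subset_support _ hyq hzq]
  -- `z` lies beyond `y` on the shortest path `p`, so `dist x z = dist x y + dist y z`
  have := hymax z hzS
  have := p.dist_add_dist_of_mem_support hp hyp
  have := p.dist_add_dist_of_mem_support hp (support_dropUntil_subset_support _ hyp hzp)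
  have := (p.dropUntil y hyp).dist_add_dist_of_mem_support
    (p.length_dropUntil_eq_dist hp hyp) hzp
  exact (((p.dropUntil y hyp).takeUntil z hzp).reachable.dist_eq_zero_iff.mp (by omega)).symm

end Geodesic

lemma IsPath.reverse_append {y u v : V} {p : G.Walk y u} {q : G.Walk y v} (hp : p.IsPath)
    (hq : q.IsPath) (h : ∀ z ∈ p.support, z ∈ q.support → z = y) :
    (p.reverse.append q).IsPath := by
  rw [isPath_def, support_append]
  refine List.Nodup.append hp.reverse.support_nodup hq.support_nodup.tail fun z hzp hzq => ?_
  rw [support_reverse, List.mem_reverse] at hzp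
  have hyq : y ∉ q.support.tail := by
    have := hq.support_nodup
    rw [← q.cons_tail_support, List.nodup_cons] at this
    exact this.1
  exact hyq (h z hzp (List.mem_of_mem_tail hzq) ▸ hzq)

lemma IsTrail.length_eq_of_mem_edges_iff {u v u' v' : V} {p : G.Walk u v} {q : G.Walk u' v'}
    (hp : p.IsTrail) (hq : q.IsTrail) (h : ∀ e, e ∈ p.edges ↔ e ∈ q.edges) :
    p.length = q.length := by
  rw [← length_edges, ← length_edges,
    ((List.perm_ext_iff_of_nodup hp.edges_nodup hq.edges_nodup).mpr h).length_eq]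

end Walk

open Walk

lemma Adj.exists_path_length_eq_dist_mem_edges_of_dist_lt {x u v : V} (hadj : G.Adj u v)
    (hr : G.Reachable x u) (h : G.dist x u < G.dist x v) :
    ∃ q : G.Walk x v, q.IsPath ∧ q.length = G.dist x v ∧ s(u, v) ∈ q.edges := by
  obtain ⟨p, hp⟩ := hr.exists_walk_length_eq_dist
  have htri := hadj.reachable.dist_triangle_right x
  rw [dist_eq_one_iff_adj.mpr hadj] at htri
  have hlen : (p.concat hadj).length = G.dist x v := by
    rw [length_concat, hp]
    omega
  exact ⟨p.concat hadj, isPath_of_length_eq_dist _ hlen, hlen, by simp [edges_concat]⟩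

lemma Adj.exists_odd_isCycle_of_dist_eq {x u v : V} (hadj : G.Adj u v) (hr : G.Reachable x u)
    (h : G.dist x u = G.dist x v) :
    ∃ D : G.Walk v v, D.IsCycle ∧ s(u, v) ∈ D.edges ∧ Odd D.length := by
  classical
  obtain ⟨p, hp, hpl⟩ := hr.exists_path_of_dist
  obtain ⟨q, hq, hql⟩ := (hr.trans hadj.reachable).exists_path_of_dist
  obtain ⟨y, hyp, hyq, hdisj⟩ := p.exists_last_common_vertex q hpl
  have hvp : v ∉ p.support := fun hv =>
    hadj.ne (p.eq_of_mem_support_of_dist_eq hpl hv h.symm).symm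
  have huq : u ∉ q.support := fun hu => hadj.ne (q.eq_of_mem_support_of_dist_eq hql hu h)
  have hlen : (p.dropUntil y hyp).length = (q.dropUntil y hyq).length := by
    have := p.dist_add_dist_of_mem_support hpl hyp
    have := q.dist_add_dist_of_mem_support hql hyq
    rw [p.length_dropUntil_eq_dist hpl, q.length_dropUntil_eq_dist hql]
    omega
  set P := (p.dropUntil y hyp).reverse.append (q.dropUntil y hyq)
  have hP : P.IsPath := (hp.dropUntil hyp).reverse_append (hq.dropUntil hyq) hdisj
  have hvu : s(v, u) ∉ P.edges := by
    simp only [P, edges_append, edges_reverse, List.mem_append, List.mem_reverse, not_or]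
    exact ⟨fun he => hvp <| support_dropUntil_subset_support _ hyp <|
        fst_mem_support_of_mem_edges _ he,
      fun he => huq <| support_dropUntil_subset_support _ hyq <|
        snd_mem_support_of_mem_edges _ he⟩
  refine ⟨cons hadj.symm P, (cons_isCycle_iff P hadj.symm).mpr ⟨hP, hvu⟩,
    by simp [Sym2.eq_swap], ⟨(p.dropUntil y hyp).length, ?_⟩⟩
  simp only [P, length_cons, length_append, length_reverse]
  omega

end SimpleGraph

lemma IsCactus.length_eq {V : Type*} {G : SimpleGraph V} {a b : V} (hG : IsCactus G)
    {C : G.Walk a a} {D : G.Walk b b} (hC : C.IsCycle) (hD : D.IsCycle) {e : Sym2 V}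
    (heC : e ∈ C.edges) (heD : e ∈ D.edges) : C.length = D.length :=
  hC.isTrail.length_eq_of_mem_edges_iff hD.isTrail (hG a b C D hC hD ⟨e, heC, heD⟩)

theorem stmt_15_general {V : Type*} (G : SimpleGraph V)
    (hconn : G.Connected) (hcactus : IsCactus G)
    (w : V) (C : G.Walk w w) (hC : C.IsCycle) (heven : Even C.length)
    (u v : V) (huv : s(u, v) ∈ C.edges) (x : V) :
    (∃ q : G.Walk x u, q.IsPath ∧ q.length = G.dist x u ∧ s(u, v) ∈ q.edges) ∨
    (∃ q : G.Walk x v, q.IsPath ∧ q.length = G.dist x v ∧ s(u, v) ∈ q.edges) := by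
  have hadj : G.Adj u v := C.adj_of_mem_edges huv
  rcases lt_trichotomy (G.dist x u) (G.dist x v) with h | h | h
  · exact .inr (hadj.exists_path_length_eq_dist_mem_edges_of_dist_lt (hconn x u) h)
  · obtain ⟨D, hD, huvD, hodd⟩ := hadj.exists_odd_isCycle_of_dist_eq (hconn x u) h
    rw [hcactus.length_eq hC hD huv huvD] at heven
    exact absurd heven (Nat.not_even_iff_odd.mpr hodd)
  · obtain ⟨q, hq, hql, huvq⟩ :=
      hadj.symm.exists_path_length_eq_dist_mem_edges_of_dist_lt (hconn x v) h
    exact .inl ⟨q, hq, hql, Sym2.eq_swap ▸ huvq⟩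

theorem stmt_15 {V : Type*} [Fintype V] (G : SimpleGraph V)
    (hconn : G.Connected) (hcactus : IsCactus G)
    (w : V) (C : G.Walk w w) (hC : C.IsCycle) (heven : Even C.length)
    (u v : V) (huv : s(u, v) ∈ C.edges) (x : V) :
    (∃ q : G.Walk x u, q.IsPath ∧ q.length = G.dist x u ∧ s(u, v) ∈ q.edges) ∨
    (∃ q : G.Walk x v, q.IsPath ∧ q.length = G.dist x v ∧ s(u, v) ∈ q.edges) :=
  stmt_15_general G hconn hcactus w C hC heven u v huv x
end

section
/- Let G be a finite connected cactus graph, let C be a cycle of odd length in G, and let uv be an edge of C. Let w = vopp(uv) be the unique vertex of C equidistant in G from u and v, and let S(w,C) be the set of vertices reachable from w in the graph obtained from G by deleting all edges of C. Then for every vertex x of G not in S(w,C), either there is a path from x to u of length dist(x,u) that contains the edge uv, or there is a path from x to v of length dist(x,v) that contains the edge uv. -/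
/-!
If `dist x u ≠ dist x v`, the two distances differ by one, and a shortest path to the nearer
endpoint followed by the edge `uv` is a shortest path to the other one.

Otherwise `x` is equidistant from `u` and `v`, like `w`. For such a vertex `y`, take shortest
paths `P` to `u` and `Q` to `v` and let `z` be their common vertex farthest from `y`. The ends of
`P` and `Q` after `z` have equal length and, closed up by `uv`, form a cycle; in a cactus this
cycle is `C`. So `z` is the midpoint of the path `C - uv`, whatever `y` was, and the initial
segment of `P` joins `y` to `z` without using edges of `C`. Hence `x` and `w` would be joined in
`G` minus the edges of `C`.
-/

open SimpleGraph

namespace SimpleGraph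

variable {V : Type*} {G : SimpleGraph V}

namespace Walk

lemma dist_add_dist_of_length_eq_dist {a b t : V} {p : G.Walk a b}
    (hp : p.length = G.dist a b) (ht : t ∈ p.support) :
    G.dist a t + G.dist t b = G.dist a b := by
  classical
  rw [← length_eq_dist_of_subwalk hp (p.isSubwalk_takeUntil ht),
    ← length_eq_dist_of_subwalk hp (p.isSubwalk_dropUntil ht), ← length_append, take_spec, hp]

lemma notMem_support_of_length_eq_dist {y u v : V} {p : G.Walk y u} (hadj : G.Adj u v)
    (hdist : G.dist y u = G.dist y v) (hp : p.length = G.dist y u) : v ∉ p.support := fun hv => by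
  have := dist_add_dist_of_length_eq_dist hp hv
  rw [dist_eq_one_iff_adj.mpr hadj.symm] at this
  omega

lemma IsPath.eq_of_forall_mem_edges_iff {a b : V} {p q : G.Walk a b} (hp : p.IsPath)
    (hq : q.IsPath) (h : ∀ e, e ∈ p.edges ↔ e ∈ q.edges) : p = q := by
  induction p with
  | nil => exact (eq_nil_iff_nil.mpr (isPath_iff_nil.mp hq)).symm
  | @cons a c b hac p ih =>
    cases q with
    | nil => exact eq_nil_iff_nil.mpr (isPath_iff_nil.mp hp)
    | @cons _ c' _ hac' q =>
      have hp' := (cons_isPath_iff _ _).mp hp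
      have hq' := (cons_isPath_iff _ _).mp hq
      have hc : c = c' := by
        have := (h s(a, c)).mp (by simp)
        rcases List.mem_cons.mp this with h' | h'
        · exact Sym2.congr_right.mp h'
        · exact absurd (q.fst_mem_support_of_mem_edges h') hq'.2
      subst hc
      have hpe : s(a, c) ∉ p.edges := fun he => hp'.2 (p.fst_mem_support_of_mem_edges he)
      have hqe : s(a, c) ∉ q.edges := fun he => hq'.2 (q.fst_mem_support_of_mem_edges he)
      rw [ih hp'.1 hq'.1 fun e => ?_]
      have := h e
      simp only [edges_cons, List.mem_cons] at this
      constructor <;> intro he <;> grind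

lemma IsPath.reverse_append_s16 {z u v : V} {A : G.Walk z u} {B : G.Walk z v} (hA : A.IsPath)
    (hB : B.IsPath) (h : ∀ t ∈ A.support, t ∈ B.support → t = z) :
    (A.reverse.append B).IsPath := by
  rw [isPath_def, support_append, support_reverse, List.nodup_append]
  have hBt := hB.support_nodup
  rw [← cons_tail_support] at hBt
  refine ⟨List.nodup_reverse.mpr hA.support_nodup, (List.nodup_cons.mp hBt).2, ?_⟩
  rintro t htA _ htB rfl
  rw [h t (List.mem_reverse.mp htA) (List.mem_of_mem_tail htB)] at htB
  exact (List.nodup_cons.mp hBt).1 htB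

lemma exists_mem_support_forall_mem_support_dropUntil_eq [DecidableEq V] {y u v : V}
    (P : G.Walk y u) (Q : G.Walk y v) (hQ : Q.length = G.dist y v) :
    ∃ (z : V) (hzQ : z ∈ Q.support), z ∈ P.support ∧
      ∀ t ∈ P.support, t ∈ (Q.dropUntil z hzQ).support → t = z := by
  obtain ⟨z, hz, hmax⟩ := (P.support.toFinset.filter (· ∈ Q.support)).exists_max_image
    (G.dist y) ⟨y, by simp⟩
  simp only [Finset.mem_filter, List.mem_toFinset] at hz hmax
  refine ⟨z, hz.2, hz.1, fun t htP htB => ?_⟩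
  set B := Q.dropUntil z hz.2
  have hB : B.length = G.dist z v := length_eq_dist_of_subwalk hQ (Q.isSubwalk_dropUntil hz.2)
  have hyt := dist_add_dist_of_length_eq_dist hQ (Q.support_dropUntil_subset_support hz.2 htB)
  have hyz := dist_add_dist_of_length_eq_dist hQ hz.2
  have hzt := dist_add_dist_of_length_eq_dist hB htB
  have hle := hmax t ⟨htP, Q.support_dropUntil_subset_support hz.2 htB⟩
  have : G.dist z t = 0 := by omega
  exact ((B.takeUntil t htB).reachable.dist_eq_zero_iff.mp this).symm

lemma notMem_edges_of_forall_mem_support_eq {a b c d z : V} {p : G.Walk a b} {q : G.Walk c d}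
    (h : ∀ t ∈ p.support, t ∈ q.support → t = z) {e : Sym2 V} (hp : e ∈ p.edges) :
    e ∉ q.edges := by
  induction e using Sym2.ind with
  | _ s t =>
    intro hq
    have hs := h s (p.fst_mem_support_of_mem_edges hp) (q.fst_mem_support_of_mem_edges hq)
    have ht := h t (p.snd_mem_support_of_mem_edges hp) (q.snd_mem_support_of_mem_edges hq)
    exact (p.adj_of_mem_edges hp).ne (hs.trans ht.symm)

end Walk

open Walk

lemma exists_isCycle_cons_and_walk_to_getVert_half {y u v : V}
    (hadj : G.Adj u v) (hy : G.Reachable y u) (hdist : G.dist y u = G.dist y v) :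
    ∃ (D : G.Walk u v) (T : G.Walk y (D.getVert (D.length / 2))),
      (cons hadj.symm D).IsCycle ∧ ∀ e ∈ T.edges, e ∉ (cons hadj.symm D).edges := by
  classical
  obtain ⟨P, hP, hPl⟩ := hy.exists_path_of_dist
  obtain ⟨Q, hQ, hQl⟩ := (hy.trans hadj.reachable).exists_path_of_dist
  have hvP := notMem_support_of_length_eq_dist hadj hdist hPl
  have huQ := notMem_support_of_length_eq_dist hadj.symm hdist.symm hQl
  obtain ⟨z, hzQ, hzP, hmeet⟩ := exists_mem_support_forall_mem_support_dropUntil_eq P Q hQl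
  set T := P.takeUntil z hzP
  set A := P.dropUntil z hzP
  set B := Q.dropUntil z hzQ
  have hAB : A.length = B.length := by
    rw [length_eq_dist_of_subwalk hPl (P.isSubwalk_dropUntil hzP),
      length_eq_dist_of_subwalk hQl (Q.isSubwalk_dropUntil hzQ)]
    have := dist_add_dist_of_length_eq_dist hPl hzP
    have := dist_add_dist_of_length_eq_dist hQl hzQ
    omega
  have hmid : (A.reverse.append B).getVert ((A.reverse.append B).length / 2) = z := by
    rw [length_append, length_reverse, ← hAB, getVert_append,
      show (A.length + A.length) / 2 = A.length by omega]
    simp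
  have hPe : (T.edges ++ A.edges).Nodup := by
    rw [← edges_append, take_spec]
    exact hP.isTrail.edges_nodup
  have hAP : A.support ⊆ P.support := P.support_dropUntil_subset_support hzP
  refine ⟨A.reverse.append B, T.copy rfl hmid.symm, (cons_isCycle_iff _ _).mpr ⟨?_, ?_⟩, ?_⟩
  · exact (hP.dropUntil hzP).reverse_append_s16 (hQ.dropUntil hzQ) fun t ht => hmeet t (hAP ht)
  · simp only [edges_append, edges_reverse, List.mem_append, List.mem_reverse, not_or]
    exact ⟨fun h => hvP (hAP (A.fst_mem_support_of_mem_edges h)),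
      fun h => huQ (Q.support_dropUntil_subset_support hzQ (B.snd_mem_support_of_mem_edges h))⟩
  · intro e he
    rw [edges_copy] at he
    simp only [edges_cons, edges_append, edges_reverse, List.mem_cons, List.mem_append,
      List.mem_reverse, not_or]
    refine ⟨?_, fun h => List.disjoint_of_nodup_append hPe he h,
      notMem_edges_of_forall_mem_support_eq
        (fun t ht => hmeet t (P.support_takeUntil_subset_support hzP ht)) he⟩
    rintro rfl
    exact hvP (P.support_takeUntil_subset_support hzP (T.fst_mem_support_of_mem_edges he))

lemma IsCactus.reachable_deleteEdges_of_dist_eq (hcactus : IsCactus G) {w₀ u v y y' : V}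
    {C : G.Walk w₀ w₀} (hC : C.IsCycle) (huv : s(u, v) ∈ C.edges) (hy : G.Reachable y u)
    (hy' : G.Reachable y' u) (hdist : G.dist y u = G.dist y v)
    (hdist' : G.dist y' u = G.dist y' v) :
    (G.deleteEdges {e | e ∈ C.edges}).Reachable y y' := by
  have hadj := C.adj_of_mem_edges huv
  have hcycle_edges : ∀ {D : G.Walk u v}, (cons hadj.symm D).IsCycle →
      ∀ e, e ∈ (cons hadj.symm D).edges ↔ e ∈ C.edges := fun hD =>
    hcactus _ _ _ _ hD hC ⟨s(u, v), by simp [Sym2.eq_swap], huv⟩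
  obtain ⟨D, T, hD, hT⟩ := exists_isCycle_cons_and_walk_to_getVert_half hadj hy hdist
  obtain ⟨D', T', hD', hT'⟩ := exists_isCycle_cons_and_walk_to_getVert_half hadj hy' hdist'
  obtain ⟨hDpath, hDuv⟩ := (cons_isCycle_iff _ _).mp hD
  obtain ⟨hDpath', hDuv'⟩ := (cons_isCycle_iff _ _).mp hD'
  obtain rfl : D = D' := hDpath.eq_of_forall_mem_edges_iff hDpath' fun e => by
    have h := (hcycle_edges hD e).trans (hcycle_edges hD' e).symm
    simp only [edges_cons, List.mem_cons] at h
    grind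
  exact (T.toDeleteEdges _ fun e he => (hcycle_edges hD e).not.mp (hT e he)).reachable.trans
    (T'.toDeleteEdges _ fun e he => (hcycle_edges hD e).not.mp (hT' e he)).reachable.symm

lemma exists_isPath_length_eq_dist_mem_edges {x u v : V} (hadj : G.Adj u v)
    (hx : G.Reachable x u) (hdist : G.dist x v = G.dist x u + 1) :
    ∃ q : G.Walk x v, q.IsPath ∧ q.length = G.dist x v ∧ s(u, v) ∈ q.edges := by
  obtain ⟨p, -, hp⟩ := hx.exists_path_of_dist
  have hq : (p.concat hadj).length = G.dist x v := by rw [length_concat, hp, hdist]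
  exact ⟨p.concat hadj, isPath_of_length_eq_dist _ hq, hq, by simp [edges_concat]⟩

end SimpleGraph

theorem stmt_16_general {V : Type*} (G : SimpleGraph V)
    (hconn : G.Connected) (hcactus : IsCactus G)
    (w₀ : V) (C : G.Walk w₀ w₀) (hC : C.IsCycle)
    (u v : V) (huv : s(u, v) ∈ C.edges)
    (w : V) (hwdist : G.dist w u = G.dist w v)
    (x : V) (hx : ¬ (G.deleteEdges {e | e ∈ C.edges}).Reachable w x) :
    (∃ q : G.Walk x u, q.IsPath ∧ q.length = G.dist x u ∧ s(u, v) ∈ q.edges) ∨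
    (∃ q : G.Walk x v, q.IsPath ∧ q.length = G.dist x v ∧ s(u, v) ∈ q.edges) := by
  have hadj := C.adj_of_mem_edges huv
  have h₁ := hadj.diff_dist_adj (u := x)
  have h₂ := hadj.symm.diff_dist_adj (u := x)
  rcases (by omega : G.dist x u = G.dist x v ∨ G.dist x v = G.dist x u + 1 ∨
      G.dist x u = G.dist x v + 1) with h | h | h
  · exact absurd (hcactus.reachable_deleteEdges_of_dist_eq hC huv (hconn w u) (hconn x u)
      hwdist h) hx
  · exact Or.inr (exists_isPath_length_eq_dist_mem_edges hadj (hconn x u) h)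
  · rw [Sym2.eq_swap]
    exact Or.inl (exists_isPath_length_eq_dist_mem_edges hadj.symm (hconn x v) h)

theorem stmt_16 {V : Type*} [Fintype V] (G : SimpleGraph V)
    (hconn : G.Connected) (hcactus : IsCactus G)
    (w₀ : V) (C : G.Walk w₀ w₀) (hC : C.IsCycle) (hodd : Odd C.length)
    (u v : V) (huv : s(u, v) ∈ C.edges)
    (w : V) (hw : w ∈ C.support) (hwdist : G.dist w u = G.dist w v)
    (x : V) (hx : ¬ (G.deleteEdges {e | e ∈ C.edges}).Reachable w x) :
    (∃ q : G.Walk x u, q.IsPath ∧ q.length = G.dist x u ∧ s(u, v) ∈ q.edges) ∨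
    (∃ q : G.Walk x v, q.IsPath ∧ q.length = G.dist x v ∧ s(u, v) ∈ q.edges) :=
  stmt_16_general G hconn hcactus w₀ C hC u v huv w hwdist x hx
end

section
/- Let G be a finite connected cactus graph, let c be a very strong rainbow coloring of G, let e1 be a bridge of G, and let e2 be an edge lying on a cycle of even length in G. Then c(e1) ≠ c(e2). -/
/-!
If the endpoints of an edge `xy` are equidistant from some vertex, take such a vertex `m` as close
to `x` as possible: two geodesics from `m` to `x` and to `y` then meet only at `m`, and together
with `xy` they close an odd cycle through `xy`. A bridge lies on no cycle, and in a cactus an edge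
of an even cycle lies on no odd cycle, so for both edges of the theorem the two endpoints are at
different distances from every vertex. Orienting the bridge `ab` so that `x` and `y` (which lie on
the same side) are closer to `b`, and `xy` so that `y` is closer to `b`, the walk `a, b, …, y, x`
along a geodesic from `b` to `y` is a shortest path containing both edges.
-/

open SimpleGraph

namespace SimpleGraph

variable {V : Type*} {G : SimpleGraph V}

lemma Walk.dist_add_dist_of_mem_support_s17 {u v z : V} {p : G.Walk u v}
    (hp : p.length = G.dist u v) (hz : z ∈ p.support) :
    G.dist u z + G.dist z v = G.dist u v := by
  classical
  rw [← length_eq_dist_of_subwalk hp (p.isSubwalk_takeUntil hz),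
    ← length_eq_dist_of_subwalk hp (p.isSubwalk_dropUntil hz), ← Walk.length_append,
    Walk.take_spec, hp]

lemma Walk.IsTrail.length_eq_of_forall_mem_edges_iff {u v u' v' : V} {p : G.Walk u v}
    {q : G.Walk u' v'} (hp : p.IsTrail) (hq : q.IsTrail) (h : ∀ e, e ∈ p.edges ↔ e ∈ q.edges) :
    p.length = q.length := by
  rw [← Walk.length_edges, ← Walk.length_edges]
  exact ((List.perm_ext_iff_of_nodup hp.edges_nodup hq.edges_nodup).mpr h).length_eq

lemma exists_odd_isCycle_of_isPath {m x y : V} (hxy : G.Adj x y) {p : G.Walk m x}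
    {q : G.Walk m y} (hp : p.IsPath) (hq : q.IsPath) (hlen : p.length = q.length)
    (hmeet : ∀ z ∈ p.support, z ∈ q.support → z = m) :
    ∃ C : G.Walk x x, C.IsCycle ∧ Odd C.length ∧ s(x, y) ∈ C.edges := by
  have hpos : 0 < q.length := by
    by_contra! h
    exact hxy.ne ((Walk.eq_of_length_eq_zero (p := p) (by omega)).symm.trans
      (Walk.eq_of_length_eq_zero (p := q) (by omega)))
  have hxq : x ∉ q.support := by
    intro hx
    obtain rfl := hmeet x p.end_mem_support hx
    have : p.length = 0 := Walk.length_eq_zero_iff.mpr (Walk.isPath_iff_nil.mp hp)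
    omega
  have hp' : (Walk.cons hxy q.reverse).IsPath :=
    (Walk.cons_isPath_iff _ _).mpr ⟨(Walk.isPath_reverse_iff q).mpr hq, by simpa⟩
  refine ⟨(Walk.cons hxy q.reverse).append p, hp'.isCycle_append hp ?_ ?_, ⟨q.length, ?_⟩,
    by simp⟩
  · intro z hzq hzp
    rw [Walk.support_cons, List.tail_cons, Walk.support_reverse, List.mem_reverse] at hzq
    obtain rfl := hmeet z (List.mem_of_mem_tail hzp) hzq
    exact (List.nodup_cons.mp (p.cons_tail_support ▸ hp.support_nodup)).1 hzp
  · rw [Walk.length_cons, Walk.length_reverse]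
    omega
  · simp only [Walk.length_append, Walk.length_cons, Walk.length_reverse]
    omega

lemma exists_odd_isCycle_of_dist_eq {b x y : V} (hxy : G.Adj x y) (hb : G.Reachable b x)
    (h : G.dist b x = G.dist b y) :
    ∃ C : G.Walk x x, C.IsCycle ∧ Odd C.length ∧ s(x, y) ∈ C.edges := by
  classical
  induction hk : G.dist b x using Nat.strongRec generalizing b with | ind k ih =>
  obtain ⟨p, hp, hpl⟩ := hb.exists_path_of_dist
  obtain ⟨q, hq, hql⟩ := (hb.trans hxy.reachable).exists_path_of_dist
  -- a common vertex `z ≠ b` of the two geodesics is again equidistant from `x` and `y`, and closer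
  by_cases! hmeet : ∃ z ∈ p.support, z ∈ q.support ∧ z ≠ b
  · obtain ⟨z, hzp, hzq, hzb⟩ := hmeet
    have hpz := p.dist_add_dist_of_mem_support_s17 hpl hzp
    have hqz := q.dist_add_dist_of_mem_support_s17 hql hzq
    have hbz := (p.takeUntil z hzp).reachable.pos_dist_of_ne hzb.symm
    exact ih _ (by omega) (p.dropUntil z hzp).reachable (by omega) rfl
  · exact exists_odd_isCycle_of_isPath hxy hp hq (by omega) hmeet

lemma IsBridge.dist_ne {b x y : V} (hbr : G.IsBridge s(x, y)) (hxy : G.Adj x y)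
    (hb : G.Reachable b x) : G.dist b x ≠ G.dist b y := fun h ↦
  let ⟨_, hC, _, he⟩ := exists_odd_isCycle_of_dist_eq hxy hb h
  hbr.notMem_edges_of_isCycle hC he

lemma IsBridge.dist_eq_dist_add_one_of_adj {a b x y : V} (hbr : G.IsBridge s(a, b))
    (hab : G.Adj a b) (hxy : G.Adj x y) (hne : s(a, b) ≠ s(x, y))
    (hx : G.dist x a = G.dist x b + 1) : G.dist y a = G.dist y b + 1 := by
  have hxa : G.Reachable x a := Reachable.of_dist_ne_zero (by omega)
  have hya : G.Reachable y a := hxy.symm.reachable.trans hxa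
  have hy := hbr.dist_ne hab hya
  by_contra hy'
  have hyb : G.dist y b = G.dist y a + 1 := by grind [hab.diff_dist_adj (u := y)]
  obtain ⟨p, -, hp⟩ := (hxa.trans hab.reachable).exists_path_of_dist
  obtain ⟨q, -, hq⟩ := hya.exists_path_of_dist
  have hap : s(a, b) ∉ p.edges := fun h ↦ by
    have := p.dist_add_dist_of_mem_support_s17 hp (p.fst_mem_support_of_mem_edges h)
    rw [dist_eq_one_iff_adj.mpr hab] at this
    omega
  have hbq : s(a, b) ∉ q.edges := fun h ↦ by
    have := q.dist_add_dist_of_mem_support_s17 hq (q.snd_mem_support_of_mem_edges h)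
    rw [dist_eq_one_iff_adj.mpr hab.symm] at this
    omega
  -- `a ∉ p` and `b ∉ q`, so going from `a` to `y`, over `yx`, then to `b` avoids the bridge
  have := isBridge_iff_forall_walk_mem_edges.mp hbr (q.reverse.append (.cons hxy.symm p))
  simp only [Walk.edges_append, Walk.edges_reverse, Walk.edges_cons, List.mem_append,
    List.mem_reverse, List.mem_cons] at this
  rcases this with h | h | h
  · exact hbq h
  · exact hne (h.trans Sym2.eq_swap)
  · exact hap h

end SimpleGraph

lemma IsCactus.dist_ne_of_mem_edges_of_isCycle {V : Type*} {G : SimpleGraph V}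
    (hG : IsCactus G) {w b x y : V} {C : G.Walk w w} (hC : C.IsCycle) (heven : Even C.length)
    (he : s(x, y) ∈ C.edges) (hb : G.Reachable b x) : G.dist b x ≠ G.dist b y := by
  intro h
  obtain ⟨D, hD, hodd, hDe⟩ := exists_odd_isCycle_of_dist_eq (C.adj_of_mem_edges he) hb h
  have hlen := hD.isTrail.length_eq_of_forall_mem_edges_iff hC.isTrail
    (hG x w D C hD hC ⟨_, hDe, he⟩)
  exact Nat.not_even_iff_odd.mpr hodd (hlen ▸ heven)

lemma IsVSRC.apply_ne_of_mem_edges {V : Type*} {G : SimpleGraph V} {c : Sym2 V → ℕ}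
    (hc : IsVSRC G c) {u v : V} {p : G.Walk u v} (hp : p.length = G.dist u v) {e e' : Sym2 V}
    (he : e ∈ p.edges) (he' : e' ∈ p.edges) (hne : e ≠ e') : c e ≠ c e' := fun h ↦
  hne (List.inj_on_of_nodup_map (hc u v p (p.isPath_of_length_eq_dist hp) hp) he he' h)

lemma IsVSRC.apply_ne_of_dist_eq_add_one {V : Type*} {G : SimpleGraph V} {c : Sym2 V → ℕ}
    (hc : IsVSRC G c) {a b x y : V} (hab : G.Adj a b) (hxy : G.Adj x y)
    (hne : s(a, b) ≠ s(x, y)) (hxa : G.dist x a = G.dist x b + 1)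
    (hbx : G.dist b x = G.dist b y + 1) : c s(a, b) ≠ c s(x, y) := by
  have hbx' : G.Reachable b x := Reachable.of_dist_ne_zero (by omega)
  obtain ⟨q, hq⟩ := (hbx'.trans hxy.reachable).exists_walk_length_eq_dist
  refine hc.apply_ne_of_mem_edges (p := .cons hab (q.concat hxy.symm)) ?_ (by simp)
    (by simp [Walk.edges_concat, Sym2.eq_swap]) hne
  rw [Walk.length_cons, Walk.length_concat, hq, dist_comm (u := a), hxa, dist_comm (u := x), hbx]

lemma IsVSRC.apply_ne_of_isBridge {V : Type*} {G : SimpleGraph V} {c : Sym2 V → ℕ}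
    (hc : IsVSRC G c) (hconn : G.Connected) {a b x y : V} (hbr : G.IsBridge s(a, b))
    (hxy : G.Adj x y) (hne : s(a, b) ≠ s(x, y)) (hdist : ∀ u, G.dist u x ≠ G.dist u y) :
    c s(a, b) ≠ c s(x, y) := by
  have hab : G.Adj a b := hbr.reachable_iff_adj.mp (hconn a b)
  wlog hxa : G.dist x a = G.dist x b + 1 generalizing a b
  · rw [Sym2.eq_swap] at hbr hne ⊢
    refine this hbr hne hab.symm ?_
    have := hbr.dist_ne hab.symm (hconn x b)
    grind [hab.diff_dist_adj (u := x)]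
  have hya := hbr.dist_eq_dist_add_one_of_adj hab hxy hne hxa
  wlog hbx : G.dist b x = G.dist b y + 1 generalizing x y
  · rw [Sym2.eq_swap (a := x)] at hne ⊢
    refine this hxy.symm (fun u ↦ (hdist u).symm) hne hya hxa ?_
    grind [hxy.diff_dist_adj (u := b)]
  exact hc.apply_ne_of_dist_eq_add_one hab hxy hne hxa hbx

theorem stmt_17_general {V : Type*} (G : SimpleGraph V)
    (hconn : G.Connected) (hcactus : IsCactus G)
    (c : Sym2 V → ℕ) (hc : IsVSRC G c)
    (e₁ e₂ : Sym2 V) (h₁ : G.IsBridge e₁)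
    (h₂ : ∃ (w : V) (C : G.Walk w w), C.IsCycle ∧ Even C.length ∧ e₂ ∈ C.edges) :
    c e₁ ≠ c e₂ := by
  obtain ⟨w, C, hC, heven, he₂⟩ := h₂
  have hne : e₁ ≠ e₂ := fun h ↦ h₁.notMem_edges_of_isCycle hC (h ▸ he₂)
  induction e₁ using Sym2.ind
  induction e₂ using Sym2.ind
  exact hc.apply_ne_of_isBridge hconn h₁ (C.adj_of_mem_edges he₂) hne
    fun u ↦ hcactus.dist_ne_of_mem_edges_of_isCycle hC heven he₂ (hconn u _)

theorem stmt_17 {V : Type*} [Fintype V] (G : SimpleGraph V)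
    (hconn : G.Connected) (hcactus : IsCactus G)
    (c : Sym2 V → ℕ) (hc : IsVSRC G c)
    (e₁ e₂ : Sym2 V) (h₁ : G.IsBridge e₁)
    (h₂ : ∃ (w : V) (C : G.Walk w w), C.IsCycle ∧ Even C.length ∧ e₂ ∈ C.edges) :
    c e₁ ≠ c e₂ :=
  stmt_17_general G hconn hcactus c hc e₁ e₂ h₁ h₂
end
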